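/- arXiv:1105.4492 — 10 statements merged into one kernel-verified Lean document; each statement's English description precedes it below -/
import Mathlib

section
/- Let f : [0,1] → [0,∞) be a bounded function. Then the relation E_f is an equivalence relation on [0,1]^ω if and only if the following two conditions hold: (R1) f(0) = 0; and (R2) there is a constant C ≥ 1 such that for every x, y ∈ [0,1] with x + y ∈ [0,1], both f(x+y) ≤ C(f(x) + f(y)) and f(x) ≤ C(f(x+y) + f(y)). -/
open unitInterval

/-- The element `|y - x|` of `[0,1]`, for `x y ∈ [0,1]`. -/
noncomputable def dist01 (x y : unitInterval) : unitInterval :=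
  ⟨|(y : ℝ) - (x : ℝ)|,
    abs_nonneg _,
    abs_sub_le_iff.mpr ⟨by linarith [x.2.1, x.2.2, y.2.1, y.2.2],
      by linarith [x.2.1, x.2.2, y.2.1, y.2.2]⟩⟩

/-- The relation `E_f` on `[0,1]^ω`: `(x_n) E_f (y_n)` iff `Σ f(|y_n - x_n|) < ∞`. -/
def EfRel (f : unitInterval → ℝ) (x y : ℕ → unitInterval) : Prop :=
  Summable fun n => f (dist01 (x n) (y n))

/-- The element `1/2^n` of `[0,1]`. -/
noncomputable def half (n : ℕ) : unitInterval :=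
  ⟨(1 / 2 : ℝ) ^ n, by positivity, pow_le_one₀ (by norm_num) (by norm_num)⟩

/-- Borel reducibility of binary relations. -/
def BorelReducible {X Y : Type*} [MeasurableSpace X] [MeasurableSpace Y]
    (E : X → X → Prop) (F : Y → Y → Prop) : Prop :=
  ∃ θ : X → Y, Measurable θ ∧ ∀ x x', E x x' ↔ F (θ x) (θ x')

/-- The `ℓ_p` equivalence relation on `ℝ^ω`. -/
def lpRel (p : ℝ) (x y : ℕ → ℝ) : Prop :=
  Summable fun n => |x n - y n| ^ p

/-- `max_{1 ≤ i ≤ n-1} δ · u_i · u_{n-i}`. -/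
noncomputable def maxTerm (δ : ℝ) (u : ℕ → ℝ) (n : ℕ) : ℝ :=
  sSup ((fun i => δ * u i * u (n - i)) '' Set.Icc 1 (n - 1))

private lemma abs_add_cases' (s t : ℝ) :
    |s + t| = |s| + |t| ∨ |s + t| + |t| = |s| ∨ |s + t| + |s| = |t| := by
  rcases abs_cases s with ⟨hs, hs'⟩ | ⟨hs, hs'⟩ <;>
  rcases abs_cases t with ⟨ht, ht'⟩ | ⟨ht, ht'⟩ <;>
  rcases abs_cases (s + t) with ⟨h, h'⟩ | ⟨h, h'⟩ <;>
    first
      | (left; linarith)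
      | (right; left; linarith)
      | (right; right; linarith)

private lemma key_tri (f : unitInterval → ℝ) (C : ℝ)
    (hC : ∀ (x y : unitInterval) (h : (x : ℝ) + (y : ℝ) ∈ Set.Icc (0 : ℝ) 1),
            f ⟨(x : ℝ) + (y : ℝ), h⟩ ≤ C * (f x + f y) ∧
            f x ≤ C * (f ⟨(x : ℝ) + (y : ℝ), h⟩ + f y))
    (x y z : unitInterval) :
    f (dist01 x z) ≤ C * (f (dist01 x y) + f (dist01 y z)) := by
  have hxy : (dist01 x y : ℝ) = |(y : ℝ) - x| := rfl
  have hyz : (dist01 y z : ℝ) = |(z : ℝ) - y| := rfl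
  have hxz : (dist01 x z : ℝ) = |((y : ℝ) - x) + ((z : ℝ) - y)| := by
    show |(z : ℝ) - x| = _; congr 1; ring
  rcases abs_add_cases' ((y : ℝ) - x) ((z : ℝ) - y) with h1 | h2 | h3
  · have hm : (dist01 x y : ℝ) + (dist01 y z : ℝ) ∈ Set.Icc (0 : ℝ) 1 := by
      rw [hxy, hyz, ← h1, ← hxz]; exact (dist01 x z).2
    have := (hC (dist01 x y) (dist01 y z) hm).1
    have he : (⟨(dist01 x y : ℝ) + (dist01 y z : ℝ), hm⟩ : unitInterval) = dist01 x z := by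
      apply Subtype.ext; rw [hxz, h1]; rfl
    rwa [he] at this
  · have hm : (dist01 x z : ℝ) + (dist01 y z : ℝ) ∈ Set.Icc (0 : ℝ) 1 := by
      rw [hxz, hyz, h2, ← hxy]; exact (dist01 x y).2
    have := (hC (dist01 x z) (dist01 y z) hm).2
    have he : (⟨(dist01 x z : ℝ) + (dist01 y z : ℝ), hm⟩ : unitInterval) = dist01 x y := by
      apply Subtype.ext; show (dist01 x z : ℝ) + (dist01 y z : ℝ) = _
      rw [hxz, hyz, h2]; rfl
    rwa [he] at this
  · have hm : (dist01 x z : ℝ) + (dist01 x y : ℝ) ∈ Set.Icc (0 : ℝ) 1 := by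
      rw [hxz, hxy, h3, ← hyz]; exact (dist01 y z).2
    have h4 := (hC (dist01 x z) (dist01 x y) hm).2
    have he : (⟨(dist01 x z : ℝ) + (dist01 x y : ℝ), hm⟩ : unitInterval) = dist01 y z := by
      apply Subtype.ext; show (dist01 x z : ℝ) + (dist01 x y : ℝ) = _
      rw [hxz, hxy, h3]; rfl
    rw [he] at h4
    have : C * (f (dist01 y z) + f (dist01 x y)) = C * (f (dist01 x y) + f (dist01 y z)) := by
      ring
    linarith

private lemma summable_block (N : ℕ → ℕ) (g : ℕ → ℝ) (hg : ∀ k, 0 ≤ g k) :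
    Summable (fun p : ℕ × ℕ => if p.2 < N p.1 then g p.1 else 0) ↔
      Summable (fun k => (N k : ℝ) * g k) := by
  have hnn : 0 ≤ fun p : ℕ × ℕ => if p.2 < N p.1 then g p.1 else 0 := by
    intro p; dsimp only; split
    · exact hg _
    · exact le_refl _
  rw [summable_prod_of_nonneg hnn]
  have hslice : ∀ k, Summable (fun i => if i < N k then g k else 0) :=
    fun k => summable_of_ne_finset_zero (s := Finset.range (N k))
      (fun i hi => by simp only [Finset.mem_range] at hi; simp [hi])
  have htsum : ∀ k, (∑' i, (if i < N k then g k else 0)) = (N k : ℝ) * g k := by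
    intro k
    rw [tsum_eq_sum (s := Finset.range (N k))
      (fun i hi => by simp only [Finset.mem_range] at hi; simp [hi])]
    rw [Finset.sum_congr rfl (fun i hi => if_pos (Finset.mem_range.mp hi)),
      Finset.sum_const, Finset.card_range, nsmul_eq_mul]
  constructor
  · rintro ⟨-, h⟩; simpa only [htsum] using h
  · intro h; exact ⟨hslice, by simpa only [htsum] using h⟩

/-- For bounded `f : [0,1] → [0,∞)`, `E_f` is an equivalence relation iff
(R₁) `f 0 = 0` and (R₂) there is `C ≥ 1` such that for `x, y ∈ [0,1]` with
`x + y ∈ [0,1]`, `f(x+y) ≤ C(f x + f y)` and `f x ≤ C(f(x+y) + f y)`. -/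
theorem Ef_equivalence_iff (f : unitInterval → ℝ) (hnn : ∀ x, 0 ≤ f x)
    (hbd : ∃ B : ℝ, ∀ x, f x ≤ B) :
    Equivalence (EfRel f) ↔
      (f 0 = 0 ∧
        ∃ C : ℝ, 1 ≤ C ∧
          ∀ (x y : unitInterval) (h : (x : ℝ) + (y : ℝ) ∈ Set.Icc (0 : ℝ) 1),
            f ⟨(x : ℝ) + (y : ℝ), h⟩ ≤ C * (f x + f y) ∧
            f x ≤ C * (f ⟨(x : ℝ) + (y : ℝ), h⟩ + f y)) := by
  constructor
  · -- forward direction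
    intro heq
    have hf0 : f 0 = 0 := by
      have h : Summable (fun _ : ℕ => f (dist01 0 0)) := heq.refl (fun _ => (0 : unitInterval))
      have hd : dist01 (0 : unitInterval) 0 = 0 := Subtype.ext (by simp [dist01])
      rw [hd] at h
      exact tendsto_nhds_unique tendsto_const_nhds h.tendsto_atTop_zero
    refine ⟨hf0, ?_⟩
    by_contra hno
    push_neg at hno
    -- hno : ∀ C, 1 ≤ C → ∃ x y h, (first ineq) → ¬(second ineq) i.e. < reversed
    have claim : ∀ k : ℕ, ∃ a b c : unitInterval,
        (2 : ℝ) ^ k * (f (dist01 a b) + f (dist01 b c)) < f (dist01 a c) := by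
      intro k
      obtain ⟨x, y, hxy, himp⟩ := hno ((2 : ℝ) ^ k) (one_le_pow₀ one_le_two)
      set z : unitInterval := ⟨(x : ℝ) + y, hxy⟩ with hz
      have hd1 : dist01 0 x = x := Subtype.ext (by simp [dist01, abs_of_nonneg x.2.1])
      have hd2 : dist01 x z = y := Subtype.ext (by
        show |((x : ℝ) + y) - x| = y
        rw [add_sub_cancel_left, abs_of_nonneg y.2.1])
      have hd3 : dist01 0 z = z := Subtype.ext (by
        show |((x : ℝ) + y) - 0| = (x : ℝ) + y
        rw [sub_zero, abs_of_nonneg hxy.1])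
      have hd4 : dist01 z x = y := Subtype.ext (by
        show |(x : ℝ) - ((x : ℝ) + y)| = y
        rw [show (x : ℝ) - ((x : ℝ) + y) = -y by ring, abs_neg, abs_of_nonneg y.2.1])
      by_cases hA : f z ≤ (2 : ℝ) ^ k * (f x + f y)
      · refine ⟨0, z, x, ?_⟩
        rw [hd3, hd4, hd1]
        exact himp hA
      · refine ⟨0, x, z, ?_⟩
        rw [hd1, hd2, hd3]
        linarith [not_le.mp hA]
    choose a b c hk using claim
    obtain ⟨B, hB⟩ := hbd
    have hB0 : (0 : ℝ) ≤ B := le_trans (hnn 0) (hB 0)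
    set g1 : ℕ → ℝ := fun k => f (dist01 (a k) (b k)) with hg1
    set g2 : ℕ → ℝ := fun k => f (dist01 (b k) (c k)) with hg2
    set g3 : ℕ → ℝ := fun k => f (dist01 (a k) (c k)) with hg3
    have hg3pos : ∀ k, 0 < g3 k := fun k =>
      lt_of_le_of_lt (mul_nonneg (by positivity) (add_nonneg (hnn _) (hnn _))) (hk k)
    set N : ℕ → ℕ := fun k => ⌈1 / g3 k⌉₊ with hN
    have hN1 : ∀ k, (1 : ℝ) ≤ (N k : ℝ) * g3 k := by
      intro k
      have h1 : 1 / g3 k ≤ (N k : ℝ) := Nat.le_ceil _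
      calc (1 : ℝ) = (1 / g3 k) * g3 k := (one_div_mul_cancel (hg3pos k).ne').symm
        _ ≤ (N k : ℝ) * g3 k := mul_le_mul_of_nonneg_right h1 (hg3pos k).le
    have hNg : ∀ k, (N k : ℝ) * (g1 k + g2 k) ≤ (1 + B) * (1 / 2) ^ k := by
      intro k
      have hq0 : (0 : ℝ) < (1 / 2 : ℝ) ^ k := by positivity
      have hq : (2 : ℝ) ^ k * (1 / 2 : ℝ) ^ k = 1 := by
        rw [← mul_pow]; norm_num
      have hceil : (N k : ℝ) ≤ 1 / g3 k + 1 :=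
        (Nat.ceil_lt_add_one (one_div_nonneg.mpr (hg3pos k).le)).le
      have hnn12 : (0 : ℝ) ≤ g1 k + g2 k := add_nonneg (hnn _) (hnn _)
      have e1 : g1 k + g2 k ≤ g3 k * (1 / 2) ^ k := by
        have h2 : (2 : ℝ) ^ k * (g1 k + g2 k) ≤ g3 k := (hk k).le
        calc g1 k + g2 k = ((2 : ℝ) ^ k * (g1 k + g2 k)) * (1 / 2) ^ k := by
              rw [mul_comm ((2:ℝ)^k) _, mul_assoc, hq, mul_one]
          _ ≤ g3 k * (1 / 2) ^ k := mul_le_mul_of_nonneg_right h2 hq0.le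
      have e2 : (N k : ℝ) * (g1 k + g2 k) ≤ (1 / g3 k + 1) * (g3 k * (1 / 2) ^ k) :=
        mul_le_mul hceil e1 hnn12
          (add_nonneg (one_div_nonneg.mpr (hg3pos k).le) zero_le_one)
      have e3 : (1 / g3 k + 1) * (g3 k * (1 / 2) ^ k) = (1 + g3 k) * (1 / 2) ^ k := by
        have hne : g3 k ≠ 0 := (hg3pos k).ne'
        field_simp
      have e4 : (1 + g3 k) * (1 / 2) ^ k ≤ (1 + B) * (1 / 2) ^ k :=
        mul_le_mul_of_nonneg_right (by linarith [hB (dist01 (a k) (c k))]) hq0.le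
      linarith
    set e : ℕ ≃ ℕ × ℕ := (Denumerable.eqv (ℕ × ℕ)).symm with he
    set A : ℕ × ℕ → unitInterval := fun p => if p.2 < N p.1 then a p.1 else 0 with hA
    set Bs : ℕ × ℕ → unitInterval := fun p => if p.2 < N p.1 then b p.1 else 0 with hBs
    set Cs : ℕ × ℕ → unitInterval := fun p => if p.2 < N p.1 then c p.1 else 0 with hCs
    have hd00 : dist01 (0 : unitInterval) 0 = 0 := Subtype.ext (by simp [dist01])
    have hgeom : Summable (fun k => (1 + B) * (1 / 2 : ℝ) ^ k) :=
      (summable_geometric_of_lt_one (by norm_num) (by norm_num)).mul_left _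
    have hfunAB : (fun p : ℕ × ℕ => f (dist01 (A p) (Bs p))) =
        fun p => if p.2 < N p.1 then g1 p.1 else 0 := by
      funext p
      by_cases h : p.2 < N p.1 <;> simp [hA, hBs, h, hd00, hf0, hg1]
    have hfunBC : (fun p : ℕ × ℕ => f (dist01 (Bs p) (Cs p))) =
        fun p => if p.2 < N p.1 then g2 p.1 else 0 := by
      funext p
      by_cases h : p.2 < N p.1 <;> simp [hBs, hCs, h, hd00, hf0, hg2]
    have hfunAC : (fun p : ℕ × ℕ => f (dist01 (A p) (Cs p))) =
        fun p => if p.2 < N p.1 then g3 p.1 else 0 := by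
      funext p
      by_cases h : p.2 < N p.1 <;> simp [hA, hCs, h, hd00, hf0, hg3]
    have hAB : EfRel f (fun n => A (e n)) (fun n => Bs (e n)) := by
      show Summable ((fun p : ℕ × ℕ => f (dist01 (A p) (Bs p))) ∘ e)
      rw [Equiv.summable_iff e, hfunAB]
      refine (summable_block N g1 (fun k => hnn _)).2 ?_
      refine Summable.of_nonneg_of_le (fun k => mul_nonneg (Nat.cast_nonneg _) (hnn _))
        (fun k => ?_) hgeom
      calc (N k : ℝ) * g1 k ≤ (N k : ℝ) * (g1 k + g2 k) :=
            mul_le_mul_of_nonneg_left (by linarith [hnn (dist01 (b k) (c k))])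
              (Nat.cast_nonneg _)
        _ ≤ (1 + B) * (1 / 2) ^ k := hNg k
    have hBC : EfRel f (fun n => Bs (e n)) (fun n => Cs (e n)) := by
      show Summable ((fun p : ℕ × ℕ => f (dist01 (Bs p) (Cs p))) ∘ e)
      rw [Equiv.summable_iff e, hfunBC]
      refine (summable_block N g2 (fun k => hnn _)).2 ?_
      refine Summable.of_nonneg_of_le (fun k => mul_nonneg (Nat.cast_nonneg _) (hnn _))
        (fun k => ?_) hgeom
      calc (N k : ℝ) * g2 k ≤ (N k : ℝ) * (g1 k + g2 k) :=
            mul_le_mul_of_nonneg_left (by linarith [hnn (dist01 (a k) (b k))])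
              (Nat.cast_nonneg _)
        _ ≤ (1 + B) * (1 / 2) ^ k := hNg k
    have hAC := heq.trans hAB hBC
    have hP : Summable (fun p : ℕ × ℕ => f (dist01 (A p) (Cs p))) :=
      (Equiv.summable_iff e).mp hAC
    rw [hfunAC] at hP
    have hS3 : Summable (fun k => (N k : ℝ) * g3 k) :=
      (summable_block N g3 (fun k => hnn _)).1 hP
    obtain ⟨k, hk'⟩ := (hS3.tendsto_atTop_zero.eventually_lt_const one_pos).exists
    linarith [hN1 k]
  · -- backward direction
    rintro ⟨hf0, C, hC1, hC⟩
    have hkey : ∀ x y z : unitInterval,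
        f (dist01 x z) ≤ C * (f (dist01 x y) + f (dist01 y z)) :=
      fun x y z => key_tri f C hC x y z
    have hds : ∀ v : unitInterval, dist01 v v = 0 := fun v => Subtype.ext (by simp [dist01])
    have hsymm : ∀ u v : unitInterval, dist01 u v = dist01 v u :=
      fun u v => Subtype.ext (abs_sub_comm _ _)
    constructor
    · intro x
      unfold EfRel
      simp only [hds, hf0]
      exact summable_zero
    · intro x y h
      unfold EfRel at h ⊢
      have he : (fun n => f (dist01 (y n) (x n))) = fun n => f (dist01 (x n) (y n)) :=
        funext fun n => by rw [hsymm (y n) (x n)]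
      rw [he]; exact h
    · intro x y z hxy hyz
      exact Summable.of_nonneg_of_le (fun n => hnn _)
        (fun n => hkey (x n) (y n) (z n)) ((hxy.add hyz).mul_left C)
end

section
/- Let α ≥ 1 and let φ : [0,1] → [0,∞) be a monotone increasing function with φ(1/2) > 0, and set f(x) = x^α φ(x) for x ∈ [0,1]. Suppose there exists δ > 0 such that for every n > 1 and every i with 1 ≤ i ≤ n−1, φ(1/2^n) ≥ δ·φ(1/2^i)·φ(1/2^{n−i}). Then E_f is an equivalence relation on [0,1]^ω (i.e., the relation (x_n) E_f (y_n) ⟺ Σ_{n<ω} f(|y_n − x_n|) < ∞ is reflexive, symmetric and transitive). -/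
open unitInterval

/-- Lemma: if `φ` is increasing with `φ(1/2) > 0` and satisfies the δ-inequality
`φ(1/2ⁿ) ≥ δ·φ(1/2ⁱ)·φ(1/2ⁿ⁻ⁱ)`, then `E_f` with `f(x) = x^α φ(x)` is an
equivalence relation. -/
theorem Ef_equivalence_of_delta (α : ℝ) (hα : 1 ≤ α) (φ : unitInterval → ℝ)
    (hmono : Monotone φ) (hnn : ∀ x, 0 ≤ φ x) (hpos : 0 < φ (half 1))
    (hδ : ∃ δ > (0 : ℝ), ∀ n : ℕ, 1 < n → ∀ i : ℕ, 1 ≤ i → i ≤ n - 1 →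
      δ * φ (half i) * φ (half (n - i)) ≤ φ (half n)) :
    Equivalence (EfRel fun x => (x : ℝ) ^ α * φ x) := by

  classical
  obtain ⟨δ, hδ0, hδ⟩ := hδ
  set f : unitInterval → ℝ := fun x => (x : ℝ) ^ α * φ x with hf
  have hα0 : (0:ℝ) < α := by linarith
  have hf0 : ∀ x : unitInterval, (x:ℝ) = 0 → f x = 0 := by
    intro x hx; simp [hf, hx, Real.zero_rpow hα0.ne']
  have hfnn : ∀ x, 0 ≤ f x := fun x => mul_nonneg (Real.rpow_nonneg x.2.1 _) (hnn x)
  have hhalf_mono : ∀ m n : ℕ, m ≤ n → half n ≤ half m := by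
    intro m n hmn
    exact Subtype.coe_le_coe.mp (pow_le_pow_of_le_one (by norm_num) (by norm_num) hmn)
  have hstep : ∀ n : ℕ, 1 ≤ n → δ * φ (half 1) * φ (half n) ≤ φ (half (n+1)) := by
    intro n hn
    have h := hδ (n+1) (by omega) 1 le_rfl (by omega)
    simpa using h
  have hφpos1 : ∀ n : ℕ, 0 < φ (half (n+1)) := by
    intro n
    induction n with
    | zero => exact hpos
    | succ m ih =>
      exact lt_of_lt_of_le (mul_pos (mul_pos hδ0 hpos) ih) (hstep (m+1) (by omega))
  have hφpos : ∀ n : ℕ, 0 < φ (half n) := by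
    intro n
    cases n with
    | zero => exact lt_of_lt_of_le hpos (hmono (hhalf_mono 0 1 (by omega)))
    | succ m => exact hφpos1 m
  set d : ℝ := min (δ * φ (half 1)) (φ (half 1) / φ (half 0)) with hdd
  have hd0 : 0 < d := lt_min (mul_pos hδ0 hpos) (div_pos hpos (hφpos 0))
  have hd : ∀ n : ℕ, d * φ (half n) ≤ φ (half (n+1)) := by
    intro n
    cases n with
    | zero =>
      calc d * φ (half 0) ≤ (φ (half 1) / φ (half 0)) * φ (half 0) :=
            mul_le_mul_of_nonneg_right (min_le_right _ _) (hnn _)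
        _ = φ (half 1) := div_mul_cancel₀ _ (hφpos 0).ne'
    | succ m =>
      calc d * φ (half (m+1)) ≤ (δ * φ (half 1)) * φ (half (m+1)) :=
            mul_le_mul_of_nonneg_right (min_le_left _ _) (hnn _)
        _ ≤ φ (half (m+2)) := hstep (m+1) (by omega)
  set K : ℝ := (d*d)⁻¹ with hKdef
  have hK0 : 0 < K := by positivity
  have hd2 : ∀ n : ℕ, φ (half n) ≤ K * φ (half (n+2)) := by
    intro n
    have h1 := hd n
    have h2 := hd (n+1)
    have h3 : d * d * φ (half n) ≤ φ (half (n+2)) := by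
      calc d * d * φ (half n) = d * (d * φ (half n)) := by ring
        _ ≤ d * φ (half (n+1)) := mul_le_mul_of_nonneg_left h1 hd0.le
        _ ≤ φ (half (n+2)) := h2
    calc φ (half n) = (d*d)⁻¹ * (d * d * φ (half n)) := by field_simp
      _ ≤ (d*d)⁻¹ * φ (half (n+2)) := mul_le_mul_of_nonneg_left h3 (by positivity)
  have hdouble : ∀ s t : unitInterval, 0 < (s:ℝ) → (t:ℝ) ≤ 2 * s → φ t ≤ K * φ s := by
    intro s t hs hts
    have hex : ∃ k : ℕ, ((1:ℝ)/2)^(k+1) < s := by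
      obtain ⟨k, hk⟩ := exists_pow_lt_of_lt_one hs (by norm_num : (1:ℝ)/2 < 1)
      exact ⟨k, lt_of_le_of_lt
        (pow_le_pow_of_le_one (by norm_num) (by norm_num) (by omega)) hk⟩
    set n := Nat.find hex with hn
    have hn1 : ((1:ℝ)/2)^(n+1) < s := Nat.find_spec hex
    have ht : (t:ℝ) ≤ ((1:ℝ)/2)^(n-1) := by
      rcases Nat.eq_zero_or_pos n with h0 | h0
      · rw [h0]; simpa using t.2.2
      · have hn2 : (s:ℝ) ≤ (1/2:ℝ)^n := by
          have hmin := Nat.find_min hex (show n - 1 < n from Nat.sub_lt h0 one_pos)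
          push_neg at hmin
          have : n - 1 + 1 = n := Nat.sub_add_cancel h0
          rw [this] at hmin
          exact hmin
        obtain ⟨m, hm⟩ : ∃ m, n = m+1 := ⟨n-1, (Nat.sub_add_cancel h0).symm⟩
        rw [hm] at hn2 ⊢
        have h2 : (2:ℝ) * (1/2:ℝ)^(m+1) = (1/2:ℝ)^m := by
          rw [pow_succ]; ring
        calc (t:ℝ) ≤ 2*s := hts
          _ ≤ 2 * (1/2:ℝ)^(m+1) := by linarith
          _ = (1/2:ℝ)^(m+1-1) := by simpa using h2
    have h1 : φ t ≤ φ (half (n-1)) := hmono (Subtype.coe_le_coe.mp ht)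
    have h2 : φ (half (n-1)) ≤ K * φ (half (n-1+2)) := hd2 (n-1)
    have h3 : φ (half (n-1+2)) ≤ φ (half (n+1)) := hmono (hhalf_mono (n+1) (n-1+2) (by omega))
    have h4 : φ (half (n+1)) ≤ φ s := hmono (Subtype.coe_le_coe.mp hn1.le)
    calc φ t ≤ K * φ (half (n-1+2)) := le_trans h1 h2
      _ ≤ K * φ (half (n+1)) := mul_le_mul_of_nonneg_left h3 hK0.le
      _ ≤ K * φ s := mul_le_mul_of_nonneg_left h4 hK0.le
  set C : ℝ := (2:ℝ)^α * K with hCdef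
  have hC0 : 0 < C := mul_pos (Real.rpow_pos_of_pos (by norm_num) _) hK0
  have hcore : ∀ w b : unitInterval, (w:ℝ) ≤ 2*b → f w ≤ C * f b := by
    intro w b hw
    rcases eq_or_lt_of_le b.2.1 with hb | hb
    · have hw0 : (w:ℝ) = 0 := le_antisymm (by rw [← hb] at hw; linarith) w.2.1
      rw [hf0 w hw0]
      exact mul_nonneg hC0.le (hfnn b)
    · have hφb := hdouble b w hb hw
      have hwpow : (w:ℝ)^α ≤ (2:ℝ)^α * (b:ℝ)^α := by
        calc (w:ℝ)^α ≤ ((2:ℝ)*b)^α := Real.rpow_le_rpow w.2.1 hw hα0.le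
          _ = (2:ℝ)^α * (b:ℝ)^α := Real.mul_rpow (by norm_num) b.2.1
      calc f w = (w:ℝ)^α * φ w := rfl
        _ ≤ ((2:ℝ)^α * (b:ℝ)^α) * (K * φ b) :=
            mul_le_mul hwpow hφb (hnn w) (by positivity)
        _ = C * f b := by simp only [hf, hCdef]; ring
  have hmain : ∀ x y z : unitInterval,
      f (dist01 x z) ≤ C * (f (dist01 x y) + f (dist01 y z)) := by
    intro x y z
    have htri : ((dist01 x z : unitInterval) : ℝ) ≤ (dist01 x y : unitInterval) + (dist01 y z : unitInterval) := by
      simp only [dist01]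
      have := abs_sub_le ((z:ℝ)) ((y:ℝ)) ((x:ℝ))
      calc |(z:ℝ) - x| ≤ |(z:ℝ) - y| + |(y:ℝ) - x| := abs_sub_le _ _ _
        _ = |(y:ℝ) - x| + |(z:ℝ) - y| := by ring
    rcases le_total ((dist01 x y : unitInterval) : ℝ) ((dist01 y z : unitInterval) : ℝ) with h | h
    · have h2 : ((dist01 x z : unitInterval) : ℝ) ≤ 2 * (dist01 y z : unitInterval) := by linarith
      calc f (dist01 x z) ≤ C * f (dist01 y z) := hcore _ _ h2
        _ ≤ C * (f (dist01 x y) + f (dist01 y z)) :=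
          mul_le_mul_of_nonneg_left (by linarith [hfnn (dist01 x y)]) hC0.le
    · have h2 : ((dist01 x z : unitInterval) : ℝ) ≤ 2 * (dist01 x y : unitInterval) := by linarith
      calc f (dist01 x z) ≤ C * f (dist01 x y) := hcore _ _ h2
        _ ≤ C * (f (dist01 x y) + f (dist01 y z)) :=
          mul_le_mul_of_nonneg_left (by linarith [hfnn (dist01 y z)]) hC0.le
  constructor
  · intro x
    unfold EfRel
    have : (fun n => f (dist01 (x n) (x n))) = fun _ => (0:ℝ) :=
      funext fun n => hf0 _ (by simp [dist01])
    rw [this]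
    exact summable_zero
  · intro x y h
    unfold EfRel at h ⊢
    have heq : ∀ n, dist01 (y n) (x n) = dist01 (x n) (y n) :=
      fun n => Subtype.ext (abs_sub_comm _ _)
    simpa [heq] using h
  · intro x y z h1 h2
    unfold EfRel at h1 h2 ⊢
    exact Summable.of_nonneg_of_le (fun n => hfnn _)
      (fun n => hmain (x n) (y n) (z n)) (((h1.add h2).mul_left C))
end

section
/- Let α ≥ 1 and let φ : [0,1] → [0,∞) be a monotone increasing function with φ(1/2) > 0. Suppose there exists δ > 0 such that for every n > 1 and every i with 1 ≤ i ≤ n−1, φ(1/2^n) ≥ δ·φ(1/2^i)·φ(1/2^{n−i}). Then condition (A1) holds for φ: there exist ε > 0 and M < ω such that for every n > M and all x, y ∈ [0,1], φ(x) ≤ ε·φ(y)·φ(1/2^n) implies x ≤ y/2^{n+1}. (In fact any 0 < ε < min{1/φ(1), δφ(1/4)/φ(1), δ²φ(1/4)} works for all n > 0.) -/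
open unitInterval

/-- Lemma: if `φ` is increasing with `φ(1/2) > 0` and satisfies the δ-inequality,
then condition (A₁) holds for `φ`. -/
theorem A1_of_delta (α : ℝ) (hα : 1 ≤ α) (φ : unitInterval → ℝ)
    (hmono : Monotone φ) (hnn : ∀ x, 0 ≤ φ x) (hpos : 0 < φ (half 1))
    (hδ : ∃ δ > (0 : ℝ), ∀ n : ℕ, 1 < n → ∀ i : ℕ, 1 ≤ i → i ≤ n - 1 →
      δ * φ (half i) * φ (half (n - i)) ≤ φ (half n)) :
    ∃ ε > (0 : ℝ), ∃ M : ℕ, ∀ n > M, ∀ x y : unitInterval,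
      φ x ≤ ε * φ y * φ (half n) → (x : ℝ) ≤ (y : ℝ) / 2 ^ (n + 1) := by
  obtain ⟨δ, hδ0, hδ⟩ := hδ
  have hhalf_le : ∀ a b : ℕ, b ≤ a → half a ≤ half b := fun a b h =>
    Subtype.mk_le_mk.mpr (pow_le_pow_of_le_one (by norm_num) (by norm_num) h)
  have h4 : 0 < φ (half 2) := by
    have h := hδ 2 (by norm_num) 1 le_rfl (by norm_num)
    norm_num at h
    nlinarith [mul_pos (mul_pos hδ0 hpos) hpos]
  have hp : ∀ m, 0 < φ (half m) := by
    intro m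
    induction m with
    | zero => exact lt_of_lt_of_le hpos (hmono (hhalf_le 1 0 (by norm_num)))
    | succ m ih =>
      rcases Nat.eq_zero_or_pos m with rfl | hm
      · exact hpos
      · have h := hδ (m + 1) (by omega) m (by omega) (by omega)
        have hmi : m + 1 - m = 1 := by omega
        rw [hmi] at h
        nlinarith [mul_pos (mul_pos hδ0 ih) hpos]
  set c := min δ (1 / φ (half 0)) with hc
  have hc0 : 0 < c := lt_min hδ0 (one_div_pos.mpr (hp 0))
  have hε : 0 < δ * c * φ (half 2) / 2 := div_pos (mul_pos (mul_pos hδ0 hc0) h4) two_pos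
  refine ⟨δ * c * φ (half 2) / 2, hε, 0, ?_⟩
  intro n hn x y hxy
  by_contra hlt
  push_neg at hlt
  have hx0 : (0 : ℝ) < x := lt_of_le_of_lt (div_nonneg y.2.1 (by positivity)) hlt
  obtain ⟨k, hky, hkx⟩ : ∃ k : ℕ, (y : ℝ) ≤ (1 / 2) ^ k ∧ ((1 / 2 : ℝ)) ^ (n + k + 2) < x := by
    rcases eq_or_lt_of_le y.2.1 with hy0 | hy0
    · obtain ⟨m, hm⟩ := exists_pow_lt_of_lt_one hx0 (by norm_num : (1 / 2 : ℝ) < 1)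
      exact ⟨m, by rw [← hy0]; positivity,
        lt_of_le_of_lt (pow_le_pow_of_le_one (by norm_num) (by norm_num) (by omega)) hm⟩
    · have hex : ∃ m : ℕ, (1 / 2 : ℝ) ^ (m + 1) < y := by
        obtain ⟨m, hm⟩ := exists_pow_lt_of_lt_one hy0 (by norm_num : (1 / 2 : ℝ) < 1)
        exact ⟨m, lt_of_le_of_lt
          (pow_le_pow_of_le_one (by norm_num) (by norm_num) (by omega)) hm⟩
      set k := Nat.find hex with hkdef
      have h1 : (1 / 2 : ℝ) ^ (k + 1) < y := Nat.find_spec hex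
      have h2 : (y : ℝ) ≤ (1 / 2) ^ k := by
        rcases Nat.eq_zero_or_pos k with hk | hk
        · rw [hk]; simpa using y.2.2
        · have h3 := Nat.find_min hex (m := k - 1) (by omega)
          push_neg at h3
          have hk1 : k - 1 + 1 = k := by omega
          rwa [hk1] at h3
      refine ⟨k, h2, ?_⟩
      have he : n + k + 2 = (k + 1) + (n + 1) := by ring
      calc (1 / 2 : ℝ) ^ (n + k + 2) = (1 / 2) ^ (k + 1) * (1 / 2) ^ (n + 1) := by
              rw [he, pow_add]
        _ < (y : ℝ) * (1 / 2) ^ (n + 1) := by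
              have : (0 : ℝ) < (1 / 2 : ℝ) ^ (n + 1) := by positivity
              exact mul_lt_mul_of_pos_right h1 this
        _ = (y : ℝ) / 2 ^ (n + 1) := by
              rw [div_pow, one_pow, div_eq_mul_inv, div_eq_mul_inv, one_mul]
        _ < x := hlt
  have hA : δ * φ (half (k + 2)) * φ (half n) ≤ φ (half (n + k + 2)) := by
    have h := hδ (n + k + 2) (by omega) (k + 2) (by omega) (by omega)
    have he : n + k + 2 - (k + 2) = n := by omega
    rwa [he] at h
  have hB : c * φ (half 2) * φ (half k) ≤ φ (half (k + 2)) := by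
    rcases Nat.eq_zero_or_pos k with rfl | hk
    · have h1 : c * φ (half 0) ≤ 1 := by
        have h2 : c ≤ 1 / φ (half 0) := min_le_right _ _
        rw [le_div_iff₀ (hp 0)] at h2
        linarith
      nlinarith [hp 2, hp 0]
    · have h := hδ (k + 2) (by omega) 2 (by omega) (by omega)
      have he : k + 2 - 2 = k := by omega
      rw [he] at h
      have hcd : c ≤ δ := min_le_left _ _
      nlinarith [mul_le_mul_of_nonneg_right hcd (le_of_lt (mul_pos (hp 2) (hp k)))]
  have hxx : φ (half (n + k + 2)) ≤ φ x := hmono (Subtype.mk_le_mk.mpr hkx.le)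
  have hyy : φ y ≤ φ (half k) := by
    refine hmono ?_
    exact Subtype.coe_le_coe.mp hky
  have hεk : δ * c * φ (half 2) / 2 * φ y * φ (half n) ≤
      δ * c * φ (half 2) / 2 * φ (half k) * φ (half n) :=
    mul_le_mul_of_nonneg_right (mul_le_mul_of_nonneg_left hyy (le_of_lt hε)) (le_of_lt (hp n))
  have e2 : δ * φ (half n) * (c * φ (half 2) * φ (half k)) ≤
      δ * φ (half n) * φ (half (k + 2)) :=
    mul_le_mul_of_nonneg_left hB (le_of_lt (mul_pos hδ0 (hp n)))
  have e3 : δ * c * φ (half 2) * φ (half k) * φ (half n) ≤ φ x := by nlinarith [hA, hxx]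
  have e4 : δ * c * φ (half 2) / 2 * φ (half k) * φ (half n) <
      δ * c * φ (half 2) * φ (half k) * φ (half n) := by
    have hpos2 : 0 < δ * c * φ (half 2) * φ (half k) * φ (half n) :=
      mul_pos (mul_pos (mul_pos (mul_pos hδ0 hc0) h4) (hp k)) (hp n)
    linarith
  linarith
end

section
/- Let α ≥ 1 and let φ : [0,1] → [0,∞) be a monotone increasing function with φ(1/2) > 0, and set f(x) = x^α φ(x) for x ∈ [0,1]. Suppose there exists δ > 0 such that for every n > 1 and every i with 1 ≤ i ≤ n−1, φ(1/2^n) ≥ δ·φ(1/2^i)·φ(1/2^{n−i}). Then the constant C = max{1, 4^α φ(1)/φ(1/4), 4^α/(δ φ(1/4))} satisfies: for every x, y ∈ [0,1] with x + y ∈ [0,1], both f(x+y) ≤ C(f(x) + f(y)) and f(x) ≤ C(f(x+y) + f(y)). -/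
open unitInterval

/-- The explicit constant `C = max{1, 4^α φ(1)/φ(1/4), 4^α/(δ φ(1/4))}` witnesses
condition (R₂) for `f(x) = x^α φ(x)`. -/
theorem R2_explicit_constant (α : ℝ) (hα : 1 ≤ α) (φ : unitInterval → ℝ)
    (hmono : Monotone φ) (hnn : ∀ x, 0 ≤ φ x) (hpos : 0 < φ (half 1))
    (δ : ℝ) (hδpos : 0 < δ)
    (hδ : ∀ n : ℕ, 1 < n → ∀ i : ℕ, 1 ≤ i → i ≤ n - 1 →
      δ * φ (half i) * φ (half (n - i)) ≤ φ (half n))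
    (f : unitInterval → ℝ) (hf : ∀ x, f x = (x : ℝ) ^ α * φ x)
    (C : ℝ)
    (hC : C = max 1 (max ((4 : ℝ) ^ α * φ 1 / φ (half 2))
      ((4 : ℝ) ^ α / (δ * φ (half 2))))) :
    ∀ (x y : unitInterval) (h : (x : ℝ) + (y : ℝ) ∈ Set.Icc (0 : ℝ) 1),
      f ⟨(x : ℝ) + (y : ℝ), h⟩ ≤ C * (f x + f y) ∧
      f x ≤ C * (f ⟨(x : ℝ) + (y : ℝ), h⟩ + f y) := by
  have hα0 : (0:ℝ) ≤ α := le_trans zero_le_one hα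
  have hfnn : ∀ z : unitInterval, 0 ≤ f z := fun z => by
    rw [hf]; exact mul_nonneg (Real.rpow_nonneg z.2.1 α) (hnn z)
  have hfmono : ∀ a b : unitInterval, (a:ℝ) ≤ (b:ℝ) → f a ≤ f b := by
    intro a b hab
    rw [hf, hf]
    exact mul_le_mul (Real.rpow_le_rpow a.2.1 hab hα0) (hmono hab) (hnn a)
      (Real.rpow_nonneg b.2.1 α)
  have hφ4 : 0 < φ (half 2) := by
    have h21 := hδ 2 (by norm_num) 1 le_rfl (by norm_num)
    norm_num at h21
    calc (0:ℝ) < δ * φ (half 1) * φ (half 1) := by positivity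
      _ ≤ φ (half 2) := h21
  have hC1 : (1:ℝ) ≤ C := by rw [hC]; exact le_max_left _ _
  have hC2 : (4:ℝ)^α * φ 1 / φ (half 2) ≤ C := by
    rw [hC]; exact le_trans (le_max_left _ _) (le_max_right _ _)
  have hC3 : (4:ℝ)^α / (δ * φ (half 2)) ≤ C := by
    rw [hC]; exact le_trans (le_max_right _ _) (le_max_right _ _)
  have h24 : (2:ℝ)^α ≤ (4:ℝ)^α := Real.rpow_le_rpow (by norm_num) (by norm_num) hα0
  -- key lemma assuming b ≤ a
  have key : ∀ (a b : unitInterval) (hab : (a:ℝ) + (b:ℝ) ∈ Set.Icc (0:ℝ) 1),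
      (b:ℝ) ≤ (a:ℝ) → f ⟨(a:ℝ) + (b:ℝ), hab⟩ ≤ C * (f a + f b) := by
    intro a b hab hba
    set s : ℝ := (a:ℝ) + (b:ℝ) with hs
    have hb0 : (0:ℝ) ≤ b := b.2.1
    have hs2a : s ≤ 2 * (a:ℝ) := by rw [hs]; linarith
    have hRHSnn : 0 ≤ C * (f a + f b) :=
      mul_nonneg (by linarith) (add_nonneg (hfnn a) (hfnn b))
    rcases eq_or_lt_of_le hab.1 with hs0 | hs0
    · have hz : f ⟨s, hab⟩ = 0 := by
        rw [hf]
        show s ^ α * φ _ = 0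
        rw [show s ^ α = 0 from by
          rw [← hs0, Real.zero_rpow (by linarith : α ≠ 0)], zero_mul]
      rw [hz]; exact hRHSnn
    · have ha0 : (0:ℝ) < a := by linarith
      by_cases hx4 : (1/4:ℝ) ≤ (a:ℝ)
      · -- big case
        have hφa : φ (half 2) ≤ φ a := by
          apply hmono
          rw [← Subtype.coe_le_coe]
          show ((1/2:ℝ))^2 ≤ (a:ℝ)
          norm_num; linarith
        have hφ1 : φ (⟨s, hab⟩ : unitInterval) ≤ φ 1 := by
          apply hmono
          rw [← Subtype.coe_le_coe]
          show s ≤ ((1 : unitInterval) : ℝ)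
          simpa using hab.2
        have hsa : s ^ α ≤ (2:ℝ)^α * (a:ℝ)^α := by
          rw [← Real.mul_rpow (by norm_num) a.2.1]
          exact Real.rpow_le_rpow hab.1 hs2a hα0
        have hkey : (2:ℝ)^α * φ 1 ≤ C * φ a := by
          have h1 : (2:ℝ)^α * φ 1 ≤ (4:ℝ)^α * φ 1 :=
            mul_le_mul_of_nonneg_right h24 (hnn 1)
          have h2 : (4:ℝ)^α * φ 1 = ((4:ℝ)^α * φ 1 / φ (half 2)) * φ (half 2) := by
            field_simp
          have h3 : ((4:ℝ)^α * φ 1 / φ (half 2)) * φ (half 2) ≤ C * φ (half 2) :=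
            mul_le_mul_of_nonneg_right hC2 (hnn _)
          have h4 : C * φ (half 2) ≤ C * φ a :=
            mul_le_mul_of_nonneg_left hφa (by linarith)
          linarith
        have : f ⟨s, hab⟩ ≤ C * f a := by
          rw [hf, hf]
          calc s ^ α * φ (⟨s, hab⟩ : unitInterval)
              ≤ ((2:ℝ)^α * (a:ℝ)^α) * φ 1 :=
                mul_le_mul hsa hφ1 (hnn _) (by positivity)
            _ = ((2:ℝ)^α * φ 1) * (a:ℝ)^α := by ring
            _ ≤ (C * φ a) * (a:ℝ)^α :=
                mul_le_mul_of_nonneg_right hkey (Real.rpow_nonneg a.2.1 α)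
            _ = C * ((a:ℝ)^α * φ a) := by ring
        have hmul : C * f a ≤ C * (f a + f b) :=
          mul_le_mul_of_nonneg_left (by linarith [hfnn b]) (by linarith)
        linarith
      · -- small case: a < 1/4
        push_neg at hx4
        have hs12 : s < 1/2 := by rw [hs]; linarith
        have hex : ∃ m : ℕ, (1/2:ℝ)^m < s :=
          exists_pow_lt_of_lt_one hs0 (by norm_num)
        have hkspec := Nat.find_spec hex
        have hk2 : 2 ≤ Nat.find hex := by
          by_contra hlt
          push_neg at hlt
          have hle1 : Nat.find hex ≤ 1 := by omega
          have : (1/2:ℝ)^(1:ℕ) ≤ (1/2:ℝ)^(Nat.find hex) :=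
            pow_le_pow_of_le_one (by norm_num) (by norm_num) hle1
          rw [pow_one] at this
          linarith
        set n : ℕ := Nat.find hex - 1 with hn
        have hn1 : 1 ≤ n := by omega
        have hsn : s ≤ (1/2:ℝ)^n := by
          have := Nat.find_min hex (m := n) (by omega)
          exact not_lt.mp this
        have hsn1 : (1/2:ℝ)^(n+1) < s := by
          have : n + 1 = Nat.find hex := by omega
          rw [this]; exact hkspec
        have hxn : (1/2:ℝ)^(n+2) ≤ (a:ℝ) := by
          have e : (1/2:ℝ)^(n+2) * 2 = (1/2:ℝ)^(n+1) := by ring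
          linarith
        have hδn := hδ (n+2) (by omega) 2 (by omega) (by omega)
        have hsub : n + 2 - 2 = n := by omega
        rw [hsub] at hδn
        have hφan : φ (half (n+2)) ≤ φ a := by
          apply hmono
          rw [← Subtype.coe_le_coe]
          show ((1/2:ℝ))^(n+2) ≤ (a:ℝ)
          exact hxn
        have hφs : φ (⟨s, hab⟩ : unitInterval) ≤ φ (half n) := by
          apply hmono
          rw [← Subtype.coe_le_coe]
          show s ≤ ((1/2:ℝ))^n
          exact hsn
        have hchain : δ * φ (half 2) * φ (half n) ≤ φ a := by
          have : δ * φ (half 2) * φ (half n) ≤ φ (half (n+2)) := hδn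
          linarith
        have hsa : s ^ α ≤ (2:ℝ)^α * (a:ℝ)^α := by
          rw [← Real.mul_rpow (by norm_num) a.2.1]
          exact Real.rpow_le_rpow hab.1 hs2a hα0
        have hdpos : 0 < δ * φ (half 2) := mul_pos hδpos hφ4
        have hkey : (2:ℝ)^α * φ (half n) ≤ C * φ a := by
          have h1 : (2:ℝ)^α * φ (half n) ≤ (4:ℝ)^α * φ (half n) :=
            mul_le_mul_of_nonneg_right h24 (hnn _)
          have h2 : (4:ℝ)^α * φ (half n) ≤
              ((4:ℝ)^α / (δ * φ (half 2))) * (δ * φ (half 2) * φ (half n)) := by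
            rw [div_mul_eq_mul_div, le_div_iff₀ hdpos]
            ring_nf
            nlinarith [hnn (half n), Real.rpow_nonneg (by norm_num : (0:ℝ) ≤ 4) α]
          have h3 : ((4:ℝ)^α / (δ * φ (half 2))) * (δ * φ (half 2) * φ (half n)) ≤
              ((4:ℝ)^α / (δ * φ (half 2))) * φ a :=
            mul_le_mul_of_nonneg_left hchain (by positivity)
          have h4 : ((4:ℝ)^α / (δ * φ (half 2))) * φ a ≤ C * φ a :=
            mul_le_mul_of_nonneg_right hC3 (hnn a)
          linarith
        have : f ⟨s, hab⟩ ≤ C * f a := by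
          rw [hf, hf]
          calc s ^ α * φ (⟨s, hab⟩ : unitInterval)
              ≤ ((2:ℝ)^α * (a:ℝ)^α) * φ (half n) :=
                mul_le_mul hsa hφs (hnn _) (by positivity)
            _ = ((2:ℝ)^α * φ (half n)) * (a:ℝ)^α := by ring
            _ ≤ (C * φ a) * (a:ℝ)^α :=
                mul_le_mul_of_nonneg_right hkey (Real.rpow_nonneg a.2.1 α)
            _ = C * ((a:ℝ)^α * φ a) := by ring
        have hmul : C * f a ≤ C * (f a + f b) :=
          mul_le_mul_of_nonneg_left (by linarith [hfnn b]) (by linarith)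
        linarith
  intro x y h
  constructor
  · by_cases hxy : (y:ℝ) ≤ (x:ℝ)
    · exact key x y h hxy
    · have h' : (y:ℝ) + (x:ℝ) ∈ Set.Icc (0:ℝ) 1 := by
        constructor
        · linarith [h.1]
        · linarith [h.2]
      have hk := key y x h' (le_of_lt (not_le.mp hxy))
      have heq : f ⟨(x:ℝ) + (y:ℝ), h⟩ = f ⟨(y:ℝ) + (x:ℝ), h'⟩ := by
        congr 1
        exact Subtype.ext (add_comm _ _)
      rw [heq]
      rw [add_comm (f y) (f x)] at hk
      exact hk
  · have h1 : f x ≤ f ⟨(x:ℝ) + (y:ℝ), h⟩ := hfmono x ⟨(x:ℝ) + (y:ℝ), h⟩ (show (x:ℝ) ≤ (x:ℝ) + (y:ℝ) by linarith [y.2.1])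
    have h2 := hfnn y
    have h3 := hfnn (⟨(x:ℝ) + (y:ℝ), h⟩ : unitInterval)
    calc f x ≤ f ⟨(x:ℝ) + (y:ℝ), h⟩ + f y := by linarith
      _ ≤ C * (f ⟨(x:ℝ) + (y:ℝ), h⟩ + f y) :=
        le_mul_of_one_le_left (by linarith) hC1
end

section
/- Let 0 < δ < 1 and 0 < λ < 1, and let (u_n)_{n<ω} be a sequence of real numbers with u_0 = u_1 = 1 such that for every n > 1, either u_n = u_{n−1} or u_n = λ·u_{n−1} + (1−λ)·max_{1≤i≤n−1}{δ·u_i·u_{n−i}}. Then for every n > 1: u_{n−1} ≥ u_n and u_n ≥ max_{1≤i≤n−1}{δ·u_i·u_{n−i}}. -/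
open unitInterval

lemma le_maxTerm_aux (δ : ℝ) (u : ℕ → ℝ) (n i : ℕ) (hi : i ∈ Set.Icc 1 (n - 1)) :
    δ * u i * u (n - i) ≤ maxTerm δ u n :=
  le_csSup ((Set.finite_Icc 1 (n - 1)).image _).bddAbove (Set.mem_image_of_mem _ hi)

lemma maxTerm_le_aux (δ : ℝ) (u : ℕ → ℝ) (n : ℕ) (hn : 1 < n) (c : ℝ)
    (h : ∀ i ∈ Set.Icc 1 (n - 1), δ * u i * u (n - i) ≤ c) :
    maxTerm δ u n ≤ c :=
  csSup_le ((Set.nonempty_Icc.mpr (by omega)).image _)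
    (by rintro x ⟨i, hi, rfl⟩; exact h i hi)

/-- Lemma: for the recursively constrained sequence `(u_n)`, for every `n > 1` we have
`u_{n-1} ≥ u_n ≥ max_{1 ≤ i ≤ n-1} δ·u_i·u_{n-i}`. -/
theorem un_decreasing_and_above_max (δ lam : ℝ)
    (hδ0 : 0 < δ) (hδ1 : δ < 1) (hlam0 : 0 < lam) (hlam1 : lam < 1)
    (u : ℕ → ℝ) (hu0 : u 0 = 1) (hu1 : u 1 = 1)
    (hrec : ∀ n : ℕ, 1 < n → u n = u (n - 1) ∨
      u n = lam * u (n - 1) + (1 - lam) * maxTerm δ u n) :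
    ∀ n : ℕ, 1 < n → u n ≤ u (n - 1) ∧ maxTerm δ u n ≤ u n := by
  suffices H : ∀ n : ℕ, 0 < u n ∧ (1 < n → u n ≤ u (n - 1) ∧ maxTerm δ u n ≤ u n) by
    intro n hn; exact (H n).2 hn
  intro n
  induction n using Nat.strong_induction_on with
  | _ n ih =>
  match n, ih with
  | 0, _ => exact ⟨by rw [hu0]; norm_num, by omega⟩
  | 1, _ => exact ⟨by rw [hu1]; norm_num, by omega⟩
  | (n + 2), ih =>
    have pos : ∀ k, k < n + 2 → 0 < u k := fun k hk => (ih k hk).1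
    have mono : ∀ k, k + 1 < n + 2 → u (k + 1) ≤ u k := by
      intro k hk
      rcases Nat.eq_zero_or_pos k with rfl | hk0
      · rw [hu0, hu1]
      · have := ((ih (k + 1) hk).2 (by omega)).1
        simpa using this
    have mono' : ∀ a d, a + d < n + 2 → u (a + d) ≤ u a := by
      intro a d
      induction d with
      | zero => simp
      | succ d ihd =>
        intro h
        have h1 : u (a + d + 1) ≤ u (a + d) := mono (a + d) (by omega)
        exact le_trans h1 (ihd (by omega))
    have hpos_prev : 0 < u (n + 1) := pos (n + 1) (by omega)
    have hle : maxTerm δ u (n + 2) ≤ u (n + 1) := by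
      apply maxTerm_le_aux δ u (n + 2) (by omega)
      intro i hi
      obtain ⟨hi1, hi2⟩ := hi
      rcases eq_or_lt_of_le hi2 with heq | hlt
      · have h1 : n + 2 - i = 1 := by omega
        have h2 : i = n + 1 := by omega
        rw [h1, h2, hu1]
        nlinarith [hpos_prev]
      · -- i ≤ n, so n + 2 - i ≥ 2 and n + 1 > 1
        have hiub : i ≤ n := by omega
        have h1 : u (n + 2 - i) ≤ u (n + 1 - i) := by
          have := mono' (n + 1 - i) 1 (by omega)
          have he : n + 1 - i + 1 = n + 2 - i := by omega
          rwa [he] at this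
        have hδu : (0:ℝ) ≤ δ * u i := by
          have := pos i (by omega)
          positivity
        have h2 : δ * u i * u (n + 2 - i) ≤ δ * u i * u (n + 1 - i) :=
          mul_le_mul_of_nonneg_left h1 hδu
        have h3 : δ * u i * u ((n + 1) - i) ≤ maxTerm δ u (n + 1) :=
          le_maxTerm_aux δ u (n + 1) i ⟨hi1, by omega⟩
        have h4 : maxTerm δ u (n + 1) ≤ u (n + 1) := by
          have hn1 : 1 < n + 1 := by omega
          have := ((ih (n + 1) (by omega)).2 hn1).2
          exact this
        calc δ * u i * u (n + 2 - i) ≤ δ * u i * u (n + 1 - i) := h2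
          _ ≤ maxTerm δ u (n + 1) := h3
          _ ≤ u (n + 1) := h4
    have hMpos : 0 < maxTerm δ u (n + 2) := by
      have h1 : δ * u 1 * u (n + 2 - 1) ≤ maxTerm δ u (n + 2) :=
        le_maxTerm_aux δ u (n + 2) 1 ⟨le_refl 1, by omega⟩
      have h2 : n + 2 - 1 = n + 1 := by omega
      rw [h2, hu1] at h1
      nlinarith [hpos_prev]
    have hprev : u (n + 2 - 1) = u (n + 1) := by norm_num
    rcases hrec (n + 2) (by omega) with h | h
    · rw [hprev] at h
      refine ⟨by rw [h]; exact hpos_prev, fun _ => ⟨?_, ?_⟩⟩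
      · rw [h, hprev]
      · rw [h]; exact hle
    · rw [hprev] at h
      refine ⟨?_, fun _ => ⟨?_, ?_⟩⟩
      · rw [h]; nlinarith [hMpos, hpos_prev]
      · rw [h, hprev]; nlinarith [hle]
      · rw [h]; nlinarith [hle]
end

section
/- Let f : [0,1] → [0,∞) be a Borel function such that E_f is an equivalence relation on [0,1]^ω, and suppose that for every ε > 0 there exists c ∈ [0,1] with 0 < f(c) < ε. Then ℝ^ω/ℓ_1 is Borel reducible to E_f, i.e., there is a Borel function θ : ℝ^ω → [0,1]^ω such that for all x, x̂ ∈ ℝ^ω, Σ_{n<ω} |x_n − x̂_n| < ∞ ⟺ θ(x) E_f θ(x̂). -/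
set_option maxHeartbeats 1000000


open unitInterval

section Aux

open unitInterval

lemma dist01_self (z : unitInterval) : dist01 z z = 0 := by
  apply Subtype.ext; simp [dist01]

lemma dist01_zero_left (z : unitInterval) : dist01 0 z = z := by
  apply Subtype.ext; simp [dist01, abs_of_nonneg z.2.1]

lemma dist01_zero_right (z : unitInterval) : dist01 z 0 = z := by
  apply Subtype.ext
  simp only [dist01]
  rw [show ((0 : unitInterval) : ℝ) - (z : ℝ) = -(z : ℝ) by simp, abs_neg,
    abs_of_nonneg z.2.1]

/-- The coding map: position `(n, j)` gets value `c n` iff `j < ⌊x n / eps n⌋`. -/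
noncomputable def Theta (c : ℕ → unitInterval) (eps : ℕ → ℝ) (x : ℕ → ℝ)
    (p : ℕ × ℤ) : unitInterval :=
  if ((p.2 : ℝ) + 1 ≤ x p.1 / eps p.1) then c p.1 else 0

lemma theta_key (f : unitInterval → ℝ) (f0 : f 0 = 0) (c : ℕ → unitInterval)
    (eps : ℕ → ℝ) (x x' : ℕ → ℝ) (n : ℕ) (j : ℤ) :
    f (dist01 (Theta c eps x (n, j)) (Theta c eps x' (n, j)))
      = if j ∈ Finset.Ico (min ⌊x n / eps n⌋ ⌊x' n / eps n⌋)
          (max ⌊x n / eps n⌋ ⌊x' n / eps n⌋) then f (c n) else 0 := by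
  have h1 : ((j : ℝ) + 1 ≤ x n / eps n) ↔ j < ⌊x n / eps n⌋ := by
    rw [Int.lt_iff_add_one_le, Int.le_floor]; push_cast; rfl
  have h2 : ((j : ℝ) + 1 ≤ x' n / eps n) ↔ j < ⌊x' n / eps n⌋ := by
    rw [Int.lt_iff_add_one_le, Int.le_floor]; push_cast; rfl
  simp only [Theta, Finset.mem_Ico]
  by_cases hx : j < ⌊x n / eps n⌋ <;> by_cases hx' : j < ⌊x' n / eps n⌋
  · rw [if_pos (h1.mpr hx), if_pos (h2.mpr hx'), dist01_self, f0,
      if_neg (by omega)]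
  · rw [if_pos (h1.mpr hx), if_neg (fun h => hx' (h2.mp h)), dist01_zero_right,
      if_pos (by omega)]
  · rw [if_neg (fun h => hx (h1.mp h)), if_pos (h2.mpr hx'), dist01_zero_left,
      if_pos (by omega)]
  · rw [if_neg (fun h => hx (h1.mp h)), if_neg (fun h => hx' (h2.mp h)),
      dist01_self, f0, if_neg (by omega)]

lemma floor_bounds (eps a b : ℝ) (heps : 0 < eps) :
    eps * |((⌊a / eps⌋ : ℝ) - (⌊b / eps⌋ : ℝ))| ≤ |a - b| + eps ∧
    |a - b| ≤ eps * |((⌊a / eps⌋ : ℝ) - (⌊b / eps⌋ : ℝ))| + eps := by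
  have h1 : (⌊a / eps⌋ : ℝ) ≤ a / eps := Int.floor_le _
  have h2 : a / eps < (⌊a / eps⌋ : ℝ) + 1 := Int.lt_floor_add_one _
  have h3 : (⌊b / eps⌋ : ℝ) ≤ b / eps := Int.floor_le _
  have h4 : b / eps < (⌊b / eps⌋ : ℝ) + 1 := Int.lt_floor_add_one _
  have habs : |a / eps - b / eps| = |a - b| / eps := by
    rw [div_sub_div_same, abs_div, abs_of_pos heps]
  have k1 : |((⌊a / eps⌋ : ℝ) - (⌊b / eps⌋ : ℝ))| ≤ |a / eps - b / eps| + 1 := by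
    rw [abs_le]
    constructor
    · linarith [neg_abs_le (a / eps - b / eps)]
    · linarith [le_abs_self (a / eps - b / eps)]
  have k2 : |a / eps - b / eps| ≤ |((⌊a / eps⌋ : ℝ) - (⌊b / eps⌋ : ℝ))| + 1 := by
    rw [abs_le]
    constructor
    · linarith [neg_abs_le ((⌊a / eps⌋ : ℝ) - (⌊b / eps⌋ : ℝ))]
    · linarith [le_abs_self ((⌊a / eps⌋ : ℝ) - (⌊b / eps⌋ : ℝ))]
  rw [habs] at k1 k2
  have hd : eps * (|a - b| / eps) = |a - b| := by
    field_simp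
  constructor
  · have := mul_le_mul_of_nonneg_left k1 heps.le
    rw [mul_add, hd, mul_one] at this
    linarith
  · have := mul_le_mul_of_nonneg_left k2 heps.le
    rw [mul_add, hd, mul_one] at this
    linarith

end Aux

/-- If `E_f` is an equivalence relation and `f` takes arbitrarily small positive
values, then `ℝ^ω/ℓ₁` is Borel reducible to `E_f`. -/
theorem l1_reducible_Ef (f : unitInterval → ℝ) (hf : Measurable f)
    (hnn : ∀ x, 0 ≤ f x) (hE : Equivalence (EfRel f))
    (hsmall : ∀ ε > (0 : ℝ), ∃ c : unitInterval, 0 < f c ∧ f c < ε) :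
    ∃ θ : (ℕ → ℝ) → (ℕ → unitInterval), Measurable θ ∧
      ∀ x x' : ℕ → ℝ,
        (Summable fun n => |x n - x' n|) ↔ EfRel f (θ x) (θ x') := by
  classical
  -- choose small values
  choose c hcpos hclt using fun n => hsmall ((1 / 2 : ℝ) ^ n) (by positivity)
  set eps : ℕ → ℝ := fun n => f (c n) with heps
  have hepspos : ∀ n, 0 < eps n := hcpos
  have hepssum : Summable eps :=
    Summable.of_nonneg_of_le (fun n => (hepspos n).le) (fun n => (hclt n).le)
      (summable_geometric_of_lt_one (by norm_num) (by norm_num))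
  -- f 0 = 0
  have f0 : f 0 = 0 := by
    have h := hE.refl (fun _ => (0 : unitInterval))
    unfold EfRel at h
    simp only [dist01_self] at h
    exact (summable_const_iff _).mp h
  set e : ℕ ≃ ℕ × ℤ := (Denumerable.eqv (ℕ × ℤ)).symm with he
  refine ⟨fun x k => Theta c eps x (e k), ?_, ?_⟩
  · apply measurable_pi_lambda
    intro k
    unfold Theta
    refine Measurable.ite ?_ measurable_const measurable_const
    exact measurableSet_le measurable_const
      ((measurable_pi_apply (e k).1).div_const _)
  · intro x x'
    unfold EfRel
    set F : ℕ × ℤ → ℝ :=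
      fun p => f (dist01 (Theta c eps x p) (Theta c eps x' p)) with hF
    have hile := Equiv.summable_iff (f := F) e
    have hgoal : (fun k => f (dist01 (Theta c eps x (e k)) (Theta c eps x' (e k))))
        = F ∘ ⇑e := rfl
    rw [hgoal, hile, summable_prod_of_nonneg (fun p => hnn _)]
    -- fibers
    set M : ℕ → ℤ := fun n => ⌊x n / eps n⌋ with hM
    set M' : ℕ → ℤ := fun n => ⌊x' n / eps n⌋ with hM'
    have hkey : ∀ n j, F (n, j)
        = if j ∈ Finset.Ico (min (M n) (M' n)) (max (M n) (M' n))
            then f (c n) else 0 :=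
      fun n j => theta_key f f0 c eps x x' n j
    have hsupp : ∀ n, ∀ j ∉ Finset.Ico (min (M n) (M' n)) (max (M n) (M' n)),
        F (n, j) = 0 := by
      intro n j hj; rw [hkey n j, if_neg hj]
    have hfib : ∀ n, Summable fun j => F (n, j) :=
      fun n => summable_of_ne_finset_zero (hsupp n)
    have htsum : ∀ n, (∑' j, F (n, j)) = eps n * |((M n : ℝ)) - ((M' n : ℝ))| := by
      intro n
      rw [tsum_eq_sum (hsupp n)]
      have : ∀ j ∈ Finset.Ico (min (M n) (M' n)) (max (M n) (M' n)),
          F (n, j) = f (c n) := by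
        intro j hj; rw [hkey n j, if_pos hj]
      rw [Finset.sum_congr rfl this, Finset.sum_const, Int.card_Ico,
        nsmul_eq_mul]
      have hc : (max (M n) (M' n) - min (M n) (M' n)).toNat
          = |M' n - M n|.toNat := by
        rw [max_sub_min_eq_abs]
      rw [hc, mul_comm]
      congr 1
      push_cast [Int.toNat_of_nonneg (abs_nonneg (M' n - M n))]
      rw [abs_sub_comm]
      have h3 : ((|M n - M' n|.toNat : ℕ) : ℝ) = ((|M n - M' n| : ℤ) : ℝ) := by
        norm_cast
        exact Int.toNat_of_nonneg (abs_nonneg _)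
      rw [h3, Int.cast_abs, Int.cast_sub]
    have hrw : (fun n => ∑' j, F (n, j))
        = fun n => eps n * |((M n : ℝ)) - ((M' n : ℝ))| := funext htsum
    rw [hrw]
    constructor
    · intro h
      refine ⟨hfib, ?_⟩
      refine Summable.of_nonneg_of_le
        (fun n => mul_nonneg (hepspos n).le (abs_nonneg _)) (fun n => ?_) (h.add hepssum)
      exact (floor_bounds (eps n) (x n) (x' n) (hepspos n)).1
    · rintro ⟨-, h⟩
      refine Summable.of_nonneg_of_le
        (fun n => abs_nonneg _) (fun n => ?_) (h.add hepssum)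
      exact (floor_bounds (eps n) (x n) (x' n) (hepspos n)).2
end

section
/- Let β > α ≥ 1, 0 < δ < 1 and λ = 2^{α−β}. Let (u_n)_{n<ω} be a sequence with u_0 = u_1 = 1 such that for every n > 1, either u_n = u_{n−1} or u_n = λ·u_{n−1} + (1−λ)·max_{1≤i≤n−1}{δ·u_i·u_{n−i}}. Let φ : [0,1] → [0,∞) be continuous increasing with φ(1/2^n) = u_n for each n, and set f(x) = x^α φ(x). Then there exist a function κ : {1/2^i : i < ω} → [0,1] and a constant L ≥ 1 such that for every n < ω: (i) f(1/2^n) = Σ_{i=0}^n (κ(1/2^i)/2^{n−i})^β; (ii) Σ_{i=n}^∞ κ(1/2^i)^β ≤ L·Σ_{i=0}^n (κ(1/2^i)/2^{n−i})^β; and (iii) for n ≥ 1, κ(1/2^n) ≤ L·max{κ(1/2^i)/2^{n−i} : i < n}. (One may take κ(1) = 1 and κ(1/2^n)^β = (u_n − λu_{n−1})/2^{nα} for n > 0, noting u_n − λu_{n−1} ∈ [0,1], and L = max{Σ_{k=0}^∞ 2^{−kα}, 2, (δ·2^α)^{−1/β}}.) -/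
open unitInterval

set_option maxHeartbeats 2000000 in
/-- There exist `κ : {1/2ⁱ : i < ω} → [0,1]` (indexed here by `i`) and `L ≥ 1`
satisfying conditions (i), (ii), (iii) of Theorem 16 of Mátrai's paper. -/
theorem kappa_exists (α β : ℝ) (hα : 1 ≤ α) (hαβ : α < β)
    (δ : ℝ) (hδ0 : 0 < δ) (hδ1 : δ < 1)
    (lam : ℝ) (hlam : lam = (2 : ℝ) ^ (α - β))
    (u : ℕ → ℝ) (hu0 : u 0 = 1) (hu1 : u 1 = 1)
    (hrec : ∀ n : ℕ, 1 < n → u n = u (n - 1) ∨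
      u n = lam * u (n - 1) + (1 - lam) * maxTerm δ u n)
    (φ : unitInterval → ℝ) (hφc : Continuous φ) (hmono : Monotone φ)
    (hnn : ∀ x, 0 ≤ φ x) (hφu : ∀ n : ℕ, φ (half n) = u n)
    (f : unitInterval → ℝ) (hf : ∀ x, f x = (x : ℝ) ^ α * φ x) :
    ∃ κ : ℕ → ℝ, (∀ i, κ i ∈ Set.Icc (0 : ℝ) 1) ∧
      ∃ L : ℝ, 1 ≤ L ∧
        Summable (fun i => κ i ^ β) ∧
        (∀ n : ℕ, f (half n) = ∑ i ∈ Finset.range (n + 1), (κ i / 2 ^ (n - i)) ^ β) ∧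
        (∀ n : ℕ, (∑' i : ℕ, κ (n + i) ^ β) ≤
          L * ∑ i ∈ Finset.range (n + 1), (κ i / 2 ^ (n - i)) ^ β) ∧
        (∀ n : ℕ, 1 ≤ n →
          κ n ≤ L * sSup ((fun i => κ i / 2 ^ (n - i)) '' Set.Iio n)) := by

  classical
  have h20 : (0:ℝ) < 2 := two_pos
  have hβ0 : (0:ℝ) < β := by linarith
  have hβne : β ≠ 0 := ne_of_gt hβ0
  have hlam0 : 0 < lam := by rw [hlam]; positivity
  have hlam1 : lam < 1 := by
    rw [hlam]; exact Real.rpow_lt_one_of_one_lt_of_neg one_lt_two (by linarith)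
  set A : ℝ := (2:ℝ) ^ (-α) with hA
  have hA0 : 0 < A := by rw [hA]; positivity
  have hA1 : A < 1 := by
    rw [hA]; exact Real.rpow_lt_one_of_one_lt_of_neg one_lt_two (by linarith)
  -- basic facts about u
  have hu_anti : Antitone u := by
    apply antitone_nat_of_succ_le
    intro n
    rw [← hφu, ← hφu]
    apply hmono
    show ((1/2:ℝ)^(n+1)) ≤ (1/2:ℝ)^n
    exact pow_le_pow_of_le_one (by norm_num) (by norm_num) (Nat.le_succ n)
  have hu_nn : ∀ n, 0 ≤ u n := fun n => (hφu n) ▸ hnn (half n)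
  have hu_le1 : ∀ n, u n ≤ 1 := fun n => hu0 ▸ hu_anti (Nat.zero_le n)
  -- maxTerm facts
  have hMT_bdd : ∀ n : ℕ, BddAbove ((fun i => δ * u i * u (n - i)) '' Set.Icc 1 (n-1)) :=
    fun n => ((Set.finite_Icc 1 (n-1)).image _).bddAbove
  have hMT_ge : ∀ n i : ℕ, 1 ≤ i → i ≤ n - 1 → δ * u i * u (n - i) ≤ maxTerm δ u n :=
    fun n i h1 h2 => le_csSup (hMT_bdd n) ⟨i, ⟨h1, h2⟩, rfl⟩
  have hMT_le : ∀ n : ℕ, 2 ≤ n → ∀ B : ℝ,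
      (∀ i : ℕ, 1 ≤ i → i ≤ n - 1 → δ * u i * u (n - i) ≤ B) → maxTerm δ u n ≤ B := by
    intro n hn B hB
    apply csSup_le (Set.Nonempty.image _ ⟨1, Set.mem_Icc.mpr ⟨le_refl 1, by omega⟩⟩)
    rintro x ⟨i, ⟨h1, h2⟩, rfl⟩
    exact hB i h1 h2
  -- supermultiplicativity of u
  have hSM : ∀ n : ℕ, 2 ≤ n → ∀ i : ℕ, 1 ≤ i → i ≤ n - 1 → δ * u i * u (n - i) ≤ u n := by
    intro n
    induction n using Nat.strong_induction_on with
    | _ n ih =>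
      intro hn i h1 h2
      have key : δ * u i * u (n - i) ≤ u (n - 1) := by
        rcases eq_or_lt_of_le h2 with heq | hlt
        · subst heq
          have hni : n - (n-1) = 1 := by omega
          rw [hni, hu1, mul_one]
          nlinarith [mul_nonneg (by linarith : (0:ℝ) ≤ 1-δ) (hu_nn (n-1))]
        · have e1 : u (n - i) ≤ u ((n-1) - i) := hu_anti (by omega)
          calc δ * u i * u (n - i) ≤ δ * u i * u ((n-1) - i) :=
                mul_le_mul_of_nonneg_left e1 (mul_nonneg hδ0.le (hu_nn i))
            _ ≤ u (n-1) := ih (n-1) (by omega) (by omega) i h1 (by omega)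
      rcases hrec n (by omega) with h | h
      · rw [h]; exact key
      · have hM := hMT_ge n i h1 h2
        rw [h]
        nlinarith [mul_nonneg hlam0.le (sub_nonneg.mpr key),
          mul_nonneg (by linarith : (0:ℝ) ≤ 1 - lam) (sub_nonneg.mpr hM)]
  have hkey : ∀ n : ℕ, 2 ≤ n → ∀ i : ℕ, 1 ≤ i → i ≤ n - 1 →
      δ * u i * u (n - i) ≤ u (n-1) := by
    intro n hn i h1 h2
    rcases eq_or_lt_of_le h2 with heq | hlt
    · subst heq
      have hni : n - (n-1) = 1 := by omega
      rw [hni, hu1, mul_one]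
      nlinarith [mul_nonneg (by linarith : (0:ℝ) ≤ 1-δ) (hu_nn (n-1))]
    · have e1 : u (n - i) ≤ u ((n-1) - i) := hu_anti (by omega)
      calc δ * u i * u (n - i) ≤ δ * u i * u ((n-1) - i) :=
            mul_le_mul_of_nonneg_left e1 (mul_nonneg hδ0.le (hu_nn i))
        _ ≤ u (n-1) := hSM (n-1) (by omega) i h1 (by omega)
  have hM_le_u : ∀ n : ℕ, 2 ≤ n → maxTerm δ u n ≤ u (n-1) :=
    fun n hn => hMT_le n hn _ (hkey n hn)
  -- the increment sequence D
  set D : ℕ → ℝ := fun n => u (n+1) - lam * u n with hDdef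
  have hD : ∀ n, D n = u (n+1) - lam * u n := fun n => rfl
  have hrec' : ∀ n : ℕ, 1 ≤ n →
      u (n+1) = u n ∨ u (n+1) = lam * u n + (1-lam) * maxTerm δ u (n+1) := by
    intro n hn
    have h := hrec (n+1) (by omega)
    simpa using h
  have hA_claim : ∀ n : ℕ, (1 - lam) * δ * u n ≤ D n := by
    intro n
    rcases Nat.eq_zero_or_pos n with rfl | hn
    · rw [hD]
      norm_num [hu0, hu1]
      nlinarith
    · rcases hrec' n hn with h | h
      · rw [hD, h]
        nlinarith [mul_nonneg (mul_nonneg (by linarith : (0:ℝ) ≤ 1-lam)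
          (by linarith : (0:ℝ) ≤ 1-δ)) (hu_nn n)]
      · have hM := hMT_ge (n+1) 1 le_rfl (by omega)
        rw [hu1, mul_one] at hM
        have hs : n + 1 - 1 = n := rfl
        rw [hs] at hM
        rw [hD, h]
        nlinarith [mul_nonneg (by linarith : (0:ℝ) ≤ 1-lam) (sub_nonneg.mpr hM)]
  have hB_claim : ∀ n : ℕ, D n ≤ (1 - lam) * u n := by
    intro n
    rcases Nat.eq_zero_or_pos n with rfl | hn
    · rw [hD]
      norm_num [hu0, hu1]
    · rcases hrec' n hn with h | h
      · rw [hD, h]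
        nlinarith
      · have hM : maxTerm δ u (n+1) ≤ u n := by
          have h2 := hM_le_u (n+1) (by omega)
          simpa using h2
        rw [hD, h]
        nlinarith [mul_nonneg (by linarith : (0:ℝ) ≤ 1-lam) (sub_nonneg.mpr hM)]
  have hD_nn : ∀ n, 0 ≤ D n := fun n =>
    le_trans (mul_nonneg (mul_nonneg (by linarith) hδ0.le) (hu_nn n)) (hA_claim n)
  have hD_le1 : ∀ n, D n ≤ 1 := by
    intro n
    have h1 := hB_claim n
    nlinarith [hu_le1 n, hu_nn n]
  have hD_le_u : ∀ n, D n ≤ u (n+1) := by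
    intro n
    rw [hD]
    nlinarith [mul_nonneg hlam0.le (hu_nn n)]
  have hD_step : ∀ n, D (n+1) ≤ δ⁻¹ * D n := by
    intro n
    rw [inv_mul_eq_div, le_div_iff₀ hδ0]
    have h1 : D (n+1) ≤ (1-lam) * u (n+1) := hB_claim (n+1)
    have h2 : (1-lam) * δ * u n ≤ D n := hA_claim n
    have h3 : u (n+1) ≤ u n := hu_anti (Nat.le_succ n)
    nlinarith [mul_le_mul_of_nonneg_right h1 hδ0.le,
      mul_le_mul_of_nonneg_left h3 (mul_nonneg (by linarith : (0:ℝ) ≤ 1-lam) hδ0.le)]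
  -- define κ
  set κ : ℕ → ℝ := fun n => if n = 0 then 1 else (D (n-1) * A ^ n) ^ β⁻¹ with hκdef
  have hκ0 : κ 0 = 1 := by simp [hκdef]
  have hκs : ∀ m : ℕ, κ (m+1) = (D m * A ^ (m+1)) ^ β⁻¹ := by
    intro m; simp [hκdef]
  have hbase_nn : ∀ m : ℕ, 0 ≤ D m * A ^ (m+1) :=
    fun m => mul_nonneg (hD_nn m) (pow_nonneg hA0.le _)
  have hκnn : ∀ n, 0 ≤ κ n := by
    intro n
    cases n with
    | zero => rw [hκ0]; norm_num
    | succ m => rw [hκs]; exact Real.rpow_nonneg (hbase_nn m) _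
  have hκβ : ∀ m : ℕ, κ (m+1) ^ β = D m * A ^ (m+1) := by
    intro m
    rw [hκs]
    exact Real.rpow_inv_rpow (hbase_nn m) hβne
  have hκle1 : ∀ n, κ n ≤ 1 := by
    intro n
    cases n with
    | zero => rw [hκ0]
    | succ m =>
      rw [hκs]
      refine Real.rpow_le_one (hbase_nn m) ?_ (by positivity)
      nlinarith [mul_le_mul (hD_le1 m) (pow_le_one₀ hA0.le hA1.le (n := m+1))
        (pow_nonneg hA0.le (m+1)) zero_le_one]
  -- arithmetic identities
  have hlamA : lam * A * (2:ℝ)^β = 1 := by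
    rw [hlam, hA, ← Real.rpow_add h20, ← Real.rpow_add h20,
      show α - β + -α + β = (0:ℝ) by ring, Real.rpow_zero]
  have hinv : lam * A = ((2:ℝ)^β)⁻¹ := eq_inv_of_mul_eq_one_left hlamA
  have hstepA : ∀ n : ℕ, A ^ n / (2:ℝ)^β = lam * A^(n+1) := by
    intro n
    rw [div_eq_mul_inv, ← hinv, pow_succ]; ring
  have h2β0 : (0:ℝ) < (2:ℝ)^β := Real.rpow_pos_of_pos h20 β
  -- condition (i), in the form of partial sums
  have hI' : ∀ n : ℕ, ∑ i ∈ Finset.range (n+1), (κ i / 2^(n-i))^β = A^n * u n := by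
    intro n
    induction n with
    | zero => simp [hκ0, Real.one_rpow, hu0]
    | succ n ihn =>
      rw [Finset.sum_range_succ]
      have hlast : (κ (n+1) / 2^((n+1)-(n+1)))^β = D n * A^(n+1) := by
        rw [Nat.sub_self, pow_zero, div_one, hκβ]
      have hshift : ∀ i ∈ Finset.range (n+1),
          (κ i / 2^((n+1)-i))^β = (κ i / 2^(n-i))^β / (2:ℝ)^β := by
        intro i hi
        have hi' : i ≤ n := Nat.lt_succ_iff.mp (Finset.mem_range.mp hi)
        have hsub : (n+1) - i = (n - i) + 1 := by omega
        rw [hsub, pow_succ, ← div_div,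
          Real.div_rpow (div_nonneg (hκnn i) (by positivity)) (by norm_num : (0:ℝ) ≤ 2)]
      rw [Finset.sum_congr rfl hshift, ← Finset.sum_div, ihn, hlast]
      have hrw : A ^ n * u n / (2:ℝ)^β = lam * A^(n+1) * u n := by
        rw [← hstepA n]; ring
      rw [hrw, hD]
      ring
  have hhalfα : ∀ n : ℕ, ((half n : ℝ)) ^ α = A ^ n := by
    intro n
    have e0 : ((half n : ℝ)) = (2:ℝ) ^ (-(n:ℝ)) := by
      show ((1/2:ℝ)^(n:ℕ)) = (2:ℝ) ^ (-(n:ℝ))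
      rw [one_div, inv_pow, ← Real.rpow_natCast (2:ℝ) n, ← Real.rpow_neg h20.le]
    rw [e0, hA, ← Real.rpow_natCast ((2:ℝ)^(-α)) n,
      ← Real.rpow_mul h20.le, ← Real.rpow_mul h20.le]
    congr 1
    ring
  have hfA : ∀ n : ℕ, f (half n) = A ^ n * u n := by
    intro n; rw [hf, hhalfα, hφu]
  -- summability
  have hκβ_le : ∀ n, κ n ^ β ≤ A ^ n := by
    intro n
    cases n with
    | zero => rw [hκ0, Real.one_rpow, pow_zero]
    | succ m =>
      rw [hκβ m]
      nlinarith [mul_nonneg (sub_nonneg.mpr (hD_le1 m)) (pow_nonneg hA0.le (m+1))]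
  have hκβ_nn : ∀ n, 0 ≤ κ n ^ β := fun n => Real.rpow_nonneg (hκnn n) β
  have hgeoA : Summable (fun i : ℕ => A ^ i) := summable_geometric_of_lt_one hA0.le hA1
  have hsumm : Summable (fun i => κ i ^ β) :=
    Summable.of_nonneg_of_le hκβ_nn hκβ_le hgeoA
  -- the constant L
  set L : ℝ := max (1 - A)⁻¹ (((δ*lam)⁻¹)^β⁻¹) with hLdef
  have h1A : 0 < 1 - A := by linarith
  have hL1 : (1:ℝ) ≤ L := by
    have e : (1:ℝ) ≤ (1 - A)⁻¹ := by
      have h1 : 1 - A ≤ 1 := by linarith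
      calc (1:ℝ) = (1-A) * (1-A)⁻¹ := (mul_inv_cancel₀ h1A.ne').symm
        _ ≤ 1 * (1-A)⁻¹ := mul_le_mul_of_nonneg_right h1 (inv_nonneg.mpr h1A.le)
        _ = (1-A)⁻¹ := one_mul _
    exact e.trans (le_max_left _ _)
  have hL0 : (0:ℝ) ≤ L := zero_le_one.trans hL1
  -- condition (ii)
  have hκβ_leu : ∀ n i : ℕ, κ (n + i) ^ β ≤ (u n * A ^ n) * A ^ i := by
    intro n i
    rcases Nat.eq_zero_or_pos (n+i) with h0 | hpos
    · have hn0 : n = 0 := by omega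
      have hi0 : i = 0 := by omega
      subst hn0; subst hi0
      simp [hκ0, Real.one_rpow, hu0]
    · obtain ⟨m, hm⟩ : ∃ m, n + i = m + 1 := ⟨n+i-1, by omega⟩
      rw [hm, hκβ m]
      have h1 : D m ≤ u n := by
        refine (hD_le_u m).trans ?_
        rw [← hm]
        exact hu_anti (by omega)
      calc D m * A^(m+1) ≤ u n * A^(m+1) :=
            mul_le_mul_of_nonneg_right h1 (pow_nonneg hA0.le _)
        _ = (u n * A^n) * A^i := by rw [← hm, pow_add]; ring
  have hII : ∀ n : ℕ, (∑' i : ℕ, κ (n + i) ^ β) ≤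
      L * ∑ i ∈ Finset.range (n+1), (κ i / 2^(n-i))^β := by
    intro n
    have hsummshift : Summable (fun i => κ (n+i)^β) := by
      refine ((summable_nat_add_iff n).mpr hsumm).congr fun i => ?_
      rw [Nat.add_comm]
    have hgeo2 : Summable (fun i : ℕ => (u n * A^n) * A^i) := hgeoA.mul_left _
    have h2 : (∑' i, κ (n+i)^β) ≤ ∑' i, (u n * A^n) * A^i :=
      Summable.tsum_le_tsum (fun i => hκβ_leu n i) hsummshift hgeo2
    have h3 : (∑' i : ℕ, (u n * A^n) * A^i) = (u n * A^n) * (1-A)⁻¹ := by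
      rw [tsum_mul_left, tsum_geometric_of_lt_one hA0.le hA1]
    have h4 : (u n * A^n) * (1-A)⁻¹ ≤ L * (A^n * u n) := by
      have hnn2 : 0 ≤ u n * A^n := mul_nonneg (hu_nn n) (pow_nonneg hA0.le n)
      calc (u n * A^n) * (1-A)⁻¹ = (1-A)⁻¹ * (u n * A^n) := by ring
        _ ≤ L * (u n * A^n) := mul_le_mul_of_nonneg_right (le_max_left _ _) hnn2
        _ = L * (A^n * u n) := by ring
    calc (∑' i, κ (n+i)^β) ≤ (u n * A^n) * (1-A)⁻¹ := h3 ▸ h2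
      _ ≤ L * (A^n * u n) := h4
      _ = L * ∑ i ∈ Finset.range (n+1), (κ i / 2^(n-i))^β := by rw [hI' n]
  -- condition (iii)
  have hAinv : A = (lam * (2:ℝ)^β)⁻¹ := eq_inv_of_mul_eq_one_left (by rw [← hlamA]; ring)
  have hid : (δ*lam)⁻¹ * ((2:ℝ)^β)⁻¹ = δ⁻¹ * A := by
    rw [hAinv, mul_inv, mul_inv]; ring
  have hδinv1 : (1:ℝ) ≤ δ⁻¹ := by
    calc (1:ℝ) = δ * δ⁻¹ := (mul_inv_cancel₀ hδ0.ne').symm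
      _ ≤ 1 * δ⁻¹ := mul_le_mul_of_nonneg_right hδ1.le (inv_nonneg.mpr hδ0.le)
      _ = δ⁻¹ := one_mul _
  have hbase2 : ∀ m : ℕ, D m * A^(m+1) ≤ (δ*lam)⁻¹ * (κ m / 2)^β := by
    intro m
    have hhalfβ : (κ m / 2)^β = κ m ^ β / (2:ℝ)^β :=
      Real.div_rpow (hκnn m) (by norm_num : (0:ℝ) ≤ 2) β
    rw [hhalfβ]
    cases m with
    | zero =>
      rw [hκ0, Real.one_rpow]
      have e1 : D 0 * A ^ (0+1) ≤ δ⁻¹ * A := by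
        have hp : A ^ (0+1) = A := pow_one A
        rw [hp]
        nlinarith [mul_nonneg (sub_nonneg.mpr ((hD_le1 0).trans hδinv1)) hA0.le]
      calc D 0 * A ^ (0+1) ≤ δ⁻¹ * A := e1
        _ = (δ*lam)⁻¹ * ((2:ℝ)^β)⁻¹ := hid.symm
        _ = (δ*lam)⁻¹ * (1 / (2:ℝ)^β) := by rw [one_div]
    | succ k =>
      rw [hκβ k]
      calc D (k+1) * A^(k+1+1) ≤ (δ⁻¹ * D k) * A^(k+1+1) :=
            mul_le_mul_of_nonneg_right (hD_step k) (pow_nonneg hA0.le _)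
        _ = (δ⁻¹ * A) * (D k * A^(k+1)) := by rw [pow_succ]; ring
        _ = ((δ*lam)⁻¹ * ((2:ℝ)^β)⁻¹) * (D k * A^(k+1)) := by rw [hid]
        _ = (δ*lam)⁻¹ * (D k * A^(k+1) / (2:ℝ)^β) := by ring
  have hκstep : ∀ m : ℕ, κ (m+1) ≤ ((δ*lam)⁻¹)^β⁻¹ * (κ m / 2) := by
    intro m
    rw [hκs]
    have h1 := Real.rpow_le_rpow (hbase_nn m) (hbase2 m) (by positivity : (0:ℝ) ≤ β⁻¹)
    refine h1.trans (le_of_eq ?_)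
    rw [Real.mul_rpow (inv_nonneg.mpr (mul_nonneg hδ0.le hlam0.le))
        (Real.rpow_nonneg (div_nonneg (hκnn m) (by norm_num)) β),
      Real.rpow_rpow_inv (div_nonneg (hκnn m) (by norm_num)) hβne]
  have hIII : ∀ n : ℕ, 1 ≤ n →
      κ n ≤ L * sSup ((fun i => κ i / 2 ^ (n - i)) '' Set.Iio n) := by
    intro n hn
    obtain ⟨m, rfl⟩ : ∃ m, n = m + 1 := ⟨n-1, by omega⟩
    have hmem : κ m / 2 ∈ (fun i => κ i / 2^((m+1) - i)) '' Set.Iio (m+1) := by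
      refine ⟨m, Set.mem_Iio.mpr (Nat.lt_succ_self m), ?_⟩
      show κ m / 2 ^ (m + 1 - m) = κ m / 2
      have hs : m + 1 - m = 1 := by omega
      rw [hs, pow_one]
    have hbdd : BddAbove ((fun i => κ i / 2^((m+1) - i)) '' Set.Iio (m+1)) :=
      ((Set.finite_Iio (m+1)).image _).bddAbove
    have hsup := le_csSup hbdd hmem
    have hLc : ((δ*lam)⁻¹)^β⁻¹ ≤ L := le_max_right _ _
    calc κ (m+1) ≤ ((δ*lam)⁻¹)^β⁻¹ * (κ m / 2) := hκstep m
      _ ≤ L * (κ m / 2) := mul_le_mul_of_nonneg_right hLc (div_nonneg (hκnn m) (by norm_num))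
      _ ≤ L * sSup ((fun i => κ i / 2^((m+1) - i)) '' Set.Iio (m+1)) :=
          mul_le_mul_of_nonneg_left hsup hL0
  exact ⟨κ, fun i => Set.mem_Icc.mpr ⟨hκnn i, hκle1 i⟩, L, hL1, hsumm,
    fun n => (hfA n).trans (hI' n).symm, hII, hIII⟩
end

section
/- Let 0 < δ < 1 and 0 < λ < 1, and let (u_k)_{k<ω} be a sequence with u_0 = u_1 = 1 such that for every k > 1, either u_k = u_{k−1} or u_k = λ·u_{k−1} + (1−λ)·max_{1≤i≤k−1}{δ·u_i·u_{k−i}}. Suppose n ≥ 1 and u_{2n} = λ·u_{2n−1} + (1−λ)·max_{1≤i≤2n−1}{δ·u_i·u_{2n−i}}. Then u_{2n} ≤ δ'·u_n, where δ' = λ + (1−λ)δ < 1. -/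
open unitInterval

/-- If the second alternative of the recursion holds at `2n`, then
`u_{2n} ≤ δ'·u_n` where `δ' = λ + (1-λ)δ < 1`. -/
theorem u2n_le (δ lam : ℝ)
    (hδ0 : 0 < δ) (hδ1 : δ < 1) (hlam0 : 0 < lam) (hlam1 : lam < 1)
    (u : ℕ → ℝ) (hu0 : u 0 = 1) (hu1 : u 1 = 1)
    (hrec : ∀ k : ℕ, 1 < k → u k = u (k - 1) ∨
      u k = lam * u (k - 1) + (1 - lam) * maxTerm δ u k)
    (n : ℕ) (hn : 1 ≤ n)
    (h2n : u (2 * n) = lam * u (2 * n - 1) + (1 - lam) * maxTerm δ u (2 * n)) :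
    u (2 * n) ≤ (lam + (1 - lam) * δ) * u n := by
  have main : ∀ m : ℕ, (0 ≤ u m ∧ u m ≤ 1) ∧ (1 ≤ m → u m ≤ u (m - 1)) ∧
      (∀ a b : ℕ, 1 ≤ a → 1 ≤ b → a + b = m → δ * u a * u b ≤ u m) := by
    intro m
    induction m using Nat.strong_induction_on with
    | _ m ih =>
      match m with
      | 0 =>
        refine ⟨⟨by rw [hu0]; norm_num, by rw [hu0]⟩, by omega, ?_⟩
        intro a b ha hb hab; omega
      | 1 =>
        refine ⟨⟨by rw [hu1]; norm_num, by rw [hu1]⟩, fun _ => by simp [hu0, hu1], ?_⟩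
        intro a b ha hb hab; omega
      | (m + 2) =>
        set k := m + 2 with hk
        have hk2 : 1 < k := by omega
        have huk1_nonneg : 0 ≤ u (k - 1) := ((ih (k - 1) (by omega)).1).1
        have huk1_le1 : u (k - 1) ≤ 1 := ((ih (k - 1) (by omega)).1).2
        -- key pointwise bound
        have hS' : ∀ a b : ℕ, 1 ≤ a → 1 ≤ b → a + b = k → δ * u a * u b ≤ u (k - 1) := by
          intro a b ha hb hab
          have hua0 : 0 ≤ u a := ((ih a (by omega)).1).1
          rcases Nat.eq_or_lt_of_le hb with hb1 | hb2
          · have hab' : a = k - 1 := by omega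
            rw [← hb1, hu1, hab']
            nlinarith
          · have hub : u b ≤ u (b - 1) := (ih b (by omega)).2.1 (by omega)
            have hprev := (ih (k - 1) (by omega)).2.2 a (b - 1) ha (by omega) (by omega)
            nlinarith [mul_le_mul_of_nonneg_left hub (mul_nonneg hδ0.le hua0)]
        have hbdd : BddAbove ((fun i => δ * u i * u (k - i)) '' Set.Icc 1 (k - 1)) :=
          ((Set.finite_Icc 1 (k - 1)).image _).bddAbove
        have hMle : maxTerm δ u k ≤ u (k - 1) := by
          apply Real.sSup_le _ huk1_nonneg
          rintro x ⟨i, hi, rfl⟩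
          obtain ⟨hi1, hi2⟩ := hi
          exact hS' i (k - i) hi1 (by omega) (by omega)
        have hMge : δ * u 1 * u (k - 1) ≤ maxTerm δ u k := by
          apply le_csSup hbdd
          exact ⟨1, ⟨le_refl 1, by omega⟩, rfl⟩
        have hM0 : 0 ≤ maxTerm δ u k := by
          refine le_trans ?_ hMge
          rw [hu1]; nlinarith
        rcases hrec k hk2 with hcase | hcase
        · refine ⟨⟨by rw [hcase]; exact huk1_nonneg, by rw [hcase]; exact huk1_le1⟩,
            fun _ => le_of_eq hcase, ?_⟩
          intro a b ha hb hab
          rw [hcase]; exact hS' a b ha hb hab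
        · have hmono : u k ≤ u (k - 1) := by rw [hcase]; nlinarith
          refine ⟨⟨by rw [hcase]; nlinarith, le_trans hmono huk1_le1⟩,
            fun _ => hmono, ?_⟩
          intro a b ha hb hab
          have h1 : δ * u a * u b ≤ u (k - 1) := hS' a b ha hb hab
          have h2 : δ * u a * u b ≤ maxTerm δ u k := by
            apply le_csSup hbdd
            refine ⟨a, ⟨ha, by omega⟩, ?_⟩
            have hka : k - a = b := by omega
            show δ * u a * u (k - a) = δ * u a * u b
            rw [hka]
          rw [hcase]; nlinarith
  have anti : Antitone u := by
    apply antitone_nat_of_succ_le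
    intro p
    have := (main (p + 1)).2.1 (by omega)
    simpa using this
  have hun0 : 0 ≤ u n := ((main n).1).1
  have hMle : maxTerm δ u (2 * n) ≤ δ * u n := by
    apply Real.sSup_le _ (by nlinarith)
    rintro x ⟨i, hi, rfl⟩
    obtain ⟨hi1, hi2⟩ := hi
    have hui0 : 0 ≤ u i := ((main i).1).1
    have hui1 : u i ≤ 1 := ((main i).1).2
    have huj0 : 0 ≤ u (2 * n - i) := ((main (2 * n - i)).1).1
    have huj1 : u (2 * n - i) ≤ 1 := ((main (2 * n - i)).1).2
    show δ * u i * u (2 * n - i) ≤ δ * u n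
    rcases le_or_gt n i with hni | hni
    · have h : u i ≤ u n := anti hni
      nlinarith [mul_le_mul h huj1 huj0 hun0]
    · have h : u (2 * n - i) ≤ u n := anti (by omega)
      nlinarith [mul_le_mul hui1 h huj0 (by norm_num : (0:ℝ) ≤ 1)]
  have h1 : u (2 * n - 1) ≤ u n := anti (by omega)
  rw [h2n]; nlinarith
end

section
/- Let 0 < δ < 1 and 0 < λ < 1, and let (u_k)_{k<ω} be a sequence with u_0 = u_1 = 1 such that for every k > 1, either u_k = u_{k−1} or u_k = λ·u_{k−1} + (1−λ)·max_{1≤i≤k−1}{δ·u_i·u_{k−i}}. If there is N such that for every k > N the second alternative holds, i.e. u_k = λ·u_{k−1} + (1−λ)·max_{1≤i≤k−1}{δ·u_i·u_{k−i}}, then lim_{k→∞} u_k = 0. -/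
open unitInterval

lemma maxTerm_le {δ B : ℝ} {u : ℕ → ℝ} {k : ℕ} (hk : 2 ≤ k)
    (h : ∀ i ∈ Set.Icc 1 (k-1), δ * u i * u (k - i) ≤ B) :
    maxTerm δ u k ≤ B := by
  apply csSup_le
  · exact (Set.nonempty_Icc.mpr (by omega)).image _
  · rintro x ⟨i, hi, rfl⟩; exact h i hi

lemma maxTerm_nonneg {δ : ℝ} {u : ℕ → ℝ} {k : ℕ} (hk : 2 ≤ k)
    (h : ∀ i ∈ Set.Icc 1 (k-1), 0 ≤ δ * u i * u (k - i)) :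
    0 ≤ maxTerm δ u k := by
  have hfin : ((fun i => δ * u i * u (k - i)) '' Set.Icc 1 (k-1)).Finite :=
    (Set.finite_Icc _ _).image _
  have hmem1 : (1 : ℕ) ∈ Set.Icc 1 (k-1) := Set.mem_Icc.mpr ⟨le_refl 1, by omega⟩
  exact le_trans (h 1 hmem1) (le_csSup hfin.bddAbove (Set.mem_image_of_mem _ hmem1))


/-- If the second alternative of the recursion holds eventually, then `u_k → 0`. -/
theorem un_tendsto_zero (δ lam : ℝ)
    (hδ0 : 0 < δ) (hδ1 : δ < 1) (hlam0 : 0 < lam) (hlam1 : lam < 1)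
    (u : ℕ → ℝ) (hu0 : u 0 = 1) (hu1 : u 1 = 1)
    (hrec : ∀ k : ℕ, 1 < k → u k = u (k - 1) ∨
      u k = lam * u (k - 1) + (1 - lam) * maxTerm δ u k)
    (hN : ∃ N : ℕ, ∀ k : ℕ, N < k →
      u k = lam * u (k - 1) + (1 - lam) * maxTerm δ u k) :
    Filter.Tendsto u Filter.atTop (nhds 0) := by
  obtain ⟨N, hNrec⟩ := hN
  -- bounds
  have hb : ∀ k, 0 ≤ u k ∧ u k ≤ 1 := by
    intro k
    induction k using Nat.strong_induction_on with
    | _ k ih =>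
      rcases k with _ | _ | k
      · simp [hu0]
      · simp [hu1]
      · have hprev := ih (k+2-1) (by omega)
        rcases hrec (k+2) (by omega) with hcase | hcase
        · rw [hcase]; exact hprev
        · have hterms : ∀ i ∈ Set.Icc 1 (k+2-1),
              0 ≤ δ * u i * u (k+2-i) ∧ δ * u i * u (k+2-i) ≤ δ := by
            rintro i ⟨hi1, hi2⟩
            have h1 := ih i (by omega)
            have h2 := ih (k+2-i) (by omega)
            constructor
            · exact mul_nonneg (mul_nonneg hδ0.le h1.1) h2.1
            · have hp : u i * u (k+2-i) ≤ 1 := mul_le_one₀ h1.2 h2.1 h2.2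
              calc δ * u i * u (k+2-i) = δ * (u i * u (k+2-i)) := by ring
                _ ≤ δ * 1 := mul_le_mul_of_nonneg_left hp hδ0.le
                _ = δ := mul_one δ
          have hM0 : 0 ≤ maxTerm δ u (k+2) :=
            maxTerm_nonneg (by omega) (fun i hi => (hterms i hi).1)
          have hM1 : maxTerm δ u (k+2) ≤ δ :=
            maxTerm_le (by omega) (fun i hi => (hterms i hi).2)
          rw [hcase]
          constructor
          · nlinarith [hprev.1, hprev.2]
          · nlinarith [hprev.1, hprev.2]
  -- improvement step
  have improve : ∀ C : ℝ, 0 < C → (∃ m, ∀ k, m ≤ k → u k ≤ C) →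
      ∃ m', ∀ k, m' ≤ k → u k ≤ (1+δ)/2 * C := by
    rintro C hC0 ⟨m, h⟩
    set m₁ := max N (2*m+2) with hm₁
    have hmN : N ≤ m₁ := le_max_left _ _
    have hm2 : 2*m+2 ≤ m₁ := le_max_right _ _
    have hstep : ∀ k, m₁ < k → u k ≤ lam * u (k-1) + (1-lam) * (δ * C) := by
      intro k hk
      have hrecn := hNrec k (by omega)
      have hM : maxTerm δ u k ≤ δ * C := by
        apply maxTerm_le (by omega)
        rintro i ⟨hi1, hi2⟩
        have hbi := hb i
        have hbki := hb (k - i)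
        rcases le_or_gt m i with hmi | hmi
        · have hc := h i hmi
          have hp : u i * u (k-i) ≤ C :=
            le_trans (mul_le_of_le_one_right hbi.1 hbki.2) hc
          calc δ * u i * u (k-i) = δ * (u i * u (k-i)) := by ring
            _ ≤ δ * C := mul_le_mul_of_nonneg_left hp hδ0.le
        · have hc := h (k-i) (by omega)
          have hp : u i * u (k-i) ≤ C :=
            le_trans (mul_le_of_le_one_left hbki.1 hbi.2) hc
          calc δ * u i * u (k-i) = δ * (u i * u (k-i)) := by ring
            _ ≤ δ * C := mul_le_mul_of_nonneg_left hp hδ0.le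
      rw [hrecn]
      nlinarith [hM, (hb (k-1)).1]
    have key : ∀ j, u (m₁ + 1 + j) ≤ lam ^ j + δ * C := by
      intro j
      induction j with
      | zero =>
        simp only [Nat.add_zero, pow_zero]
        nlinarith [(hb (m₁+1)).2, mul_pos hδ0 hC0]
      | succ j ihj =>
        have hs := hstep (m₁+1+(j+1)) (by omega)
        have heq : m₁+1+(j+1) - 1 = m₁+1+j := by omega
        rw [heq] at hs
        have hmul := mul_le_mul_of_nonneg_left ihj hlam0.le
        calc u (m₁+1+(j+1)) ≤ lam * u (m₁+1+j) + (1-lam) * (δ*C) := hs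
          _ ≤ lam * (lam^j + δ*C) + (1-lam)*(δ*C) := by linarith
          _ = lam^(j+1) + δ*C := by ring
    obtain ⟨J, hJ⟩ := exists_pow_lt_of_lt_one (mul_pos (by linarith : (0:ℝ) < (1-δ)/2) hC0) hlam1
    refine ⟨m₁ + 1 + J, fun k hk => ?_⟩
    have hkeq : k = m₁ + 1 + (k - (m₁+1)) := by omega
    have hJle : J ≤ k - (m₁+1) := by omega
    have hpow : lam ^ (k - (m₁+1)) ≤ lam ^ J :=
      pow_le_pow_of_le_one hlam0.le hlam1.le hJle
    have hkey := key (k - (m₁+1))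
    rw [← hkeq] at hkey
    nlinarith [hkey, hpow, hJ]
  -- iterate
  have main : ∀ n : ℕ, ∃ m, ∀ k, m ≤ k → u k ≤ ((1+δ)/2) ^ n := by
    intro n
    induction n with
    | zero => exact ⟨0, fun k _ => by simpa using (hb k).2⟩
    | succ n ihn =>
      obtain ⟨m', hm'⟩ := improve (((1+δ)/2)^n) (by positivity) ihn
      refine ⟨m', fun k hk => ?_⟩
      calc u k ≤ (1+δ)/2 * ((1+δ)/2)^n := hm' k hk
        _ = ((1+δ)/2)^(n+1) := by ring
  rw [Metric.tendsto_atTop]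
  intro ε hε
  obtain ⟨n, hn⟩ := exists_pow_lt_of_lt_one hε (show (1+δ)/2 < 1 by linarith)
  obtain ⟨m, hm⟩ := main n
  refine ⟨m, fun k hk => ?_⟩
  rw [Real.dist_eq, sub_zero, abs_of_nonneg (hb k).1]
  exact lt_of_le_of_lt (hm k hk) hn
end

section
/- Let 0 < δ < 1 and 0 < λ < 1. Then there exists a family {φ_ξ : ξ ∈ {0,1}^ω} of continuous increasing functions φ_ξ : [0,1] → [0,∞) such that: (1) for each ξ, the sequence u_n^ξ := φ_ξ(1/2^n) satisfies u_0^ξ = u_1^ξ = 1 and, for every n > 1, either u_n^ξ = u_{n−1}^ξ or u_n^ξ = λ·u_{n−1}^ξ + (1−λ)·max_{1≤i≤n−1}{δ·u_i^ξ·u_{n−i}^ξ}; and (2) for any two distinct ξ, ζ ∈ {0,1}^ω, liminf_{n→∞} φ_ξ(1/2^n)/φ_ζ(1/2^n) = 0 and liminf_{n→∞} φ_ζ(1/2^n)/φ_ξ(1/2^n) = 0. -/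
open unitInterval

/-!
Put `c = λ + (1 - λ) δ ∈ (0, 1)` and, for a bit sequence `b`, `u_n = c ^ #{k < ⌊log₂ n⌋ | b k}`.
This is constant except at `n = 2 ^ (K + 1)` with `b K` set, where it gets multiplied by `c`.
Since `u_n` only depends on `⌊log₂ n⌋` and one of `i`, `n - i` is at least `2 ^ K`, the maximum in
the recursion is `δ u_{n-1}` (attained at `i = 1`), so there `u_n = λ u_{n-1} + (1 - λ) δ u_{n-1}`.
An antitone null sequence is the trace on `{1/2ⁿ}` of a continuous increasing function, a sum of
ramps.

For `ξ ∈ {0,1}^ω` the bits are laid out in blocks `[r², (r + 1)²)`: `r` copies of a sign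
`s_ξ(r)`, then `r` copies of its negation, then `0`. The numbers of set bits below `r²` agree for
all `ξ`, and below `r² + r` they differ by `r` when `s_ξ(r) ≠ s_ζ(r)`. The sign
`s_ξ(r) = ξ j xor ε`, with `(2j + ε, P)` the pair coded by `r`, makes this happen for both
orientations and arbitrarily large `r` as soon as `ξ j ≠ ζ j`; so `c` raised to the difference of
the counts comes arbitrarily close to `0`.
-/

open Filter Topology

namespace PhiFamily

lemma log_two_eq_log_two_sub_one_or {n : ℕ} (hn : 1 < n) :
    Nat.log 2 n = Nat.log 2 (n - 1) ∨ ∃ K, n = 2 ^ (K + 1) := by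
  have hlo := Nat.pow_log_le_self 2 (by omega : n ≠ 0)
  have hhi := Nat.lt_pow_succ_log_self one_lt_two n
  rcases hlo.lt_or_eq with hlt | heq
  · exact Or.inl (Nat.log_eq_of_pow_le_of_lt_pow (by omega) (by omega)).symm
  · obtain ⟨K, hK⟩ := Nat.exists_eq_succ_of_ne_zero
      (fun h : Nat.log 2 n = 0 => by rw [h] at heq; omega)
    exact Or.inr ⟨K, by rw [← heq, hK]⟩

lemma tendsto_nat_log_atTop {b : ℕ} (hb : 1 < b) : Tendsto (Nat.log b) atTop atTop :=
  tendsto_atTop_atTop_of_monotone (fun _ _ => Nat.log_mono_right) fun E =>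
    ⟨b ^ E, (Nat.log_pow hb E).ge⟩

lemma log_two_two_pow_sub_one (K : ℕ) : Nat.log 2 (2 ^ (K + 1) - 1) = K := by
  have hK : 1 ≤ 2 ^ K := Nat.one_le_two_pow
  exact Nat.log_eq_of_pow_le_of_lt_pow (by rw [pow_succ]; omega) (by omega)

section Recursion

variable {v : ℕ → ℝ}

lemma maxTerm_log_two_pow {δ : ℝ} (hδ : 0 ≤ δ) (hv : Antitone v) (hv0 : ∀ k, 0 ≤ v k)
    (hv1 : v 0 = 1) (K : ℕ) :
    maxTerm δ (fun m => v (Nat.log 2 m)) (2 ^ (K + 1)) = δ * v K := by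
  have hpow : 2 ^ (K + 1) = 2 ^ K + 2 ^ K := by rw [pow_succ]; ring
  have hK : 1 ≤ 2 ^ K := Nat.one_le_two_pow
  have hprod : ∀ a b, 2 ^ K ≤ a → v (Nat.log 2 a) * v (Nat.log 2 b) ≤ v K := fun a b ha =>
    calc v (Nat.log 2 a) * v (Nat.log 2 b) ≤ v K * 1 :=
          mul_le_mul (hv (Nat.le_log_of_pow_le one_lt_two ha)) (hv1 ▸ hv (Nat.zero_le _))
            (hv0 _) (hv0 _)
      _ = v K := mul_one _
  apply IsGreatest.csSup_eq
  refine ⟨⟨1, ⟨le_rfl, by omega⟩, ?_⟩, ?_⟩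
  · simp [Nat.log_one_right, hv1, log_two_two_pow_sub_one]
  · rintro _ ⟨i, hi, rfl⟩
    rw [Set.mem_Icc] at hi
    change δ * v (Nat.log 2 i) * v (Nat.log 2 (2 ^ (K + 1) - i)) ≤ δ * v K
    rw [mul_assoc]
    refine mul_le_mul_of_nonneg_left ?_ hδ
    rcases le_total (2 ^ K) i with h | h
    · exact hprod _ _ h
    · rw [mul_comm]
      exact hprod _ _ (by omega)

lemma recursion_of_log_two {δ lam : ℝ} (hδ : 0 ≤ δ) (hv : Antitone v) (hv0 : ∀ k, 0 ≤ v k)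
    (hv1 : v 0 = 1) (hstep : ∀ K, v (K + 1) = v K ∨ v (K + 1) = (lam + (1 - lam) * δ) * v K)
    {n : ℕ} (hn : 1 < n) :
    v (Nat.log 2 n) = v (Nat.log 2 (n - 1)) ∨
      v (Nat.log 2 n) = lam * v (Nat.log 2 (n - 1)) +
        (1 - lam) * maxTerm δ (fun m => v (Nat.log 2 m)) n := by
  rcases log_two_eq_log_two_sub_one_or hn with h | ⟨K, rfl⟩
  · exact Or.inl (congrArg v h)
  · rw [Nat.log_pow one_lt_two, log_two_two_pow_sub_one, maxTerm_log_two_pow hδ hv hv0 hv1]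
    refine (hstep K).imp id fun h => ?_
    rw [h]
    ring

variable {c : ℝ} (p : ℕ → Prop) [DecidablePred p]

lemma pow_count_succ (K : ℕ) :
    c ^ Nat.count p (K + 1) = c ^ Nat.count p K ∨
      c ^ Nat.count p (K + 1) = c * c ^ Nat.count p K := by
  rw [Nat.count_succ]
  split_ifs
  · exact Or.inr (pow_succ' c _)
  · exact Or.inl rfl

lemma antitone_pow_count (hc0 : 0 ≤ c) (hc1 : c ≤ 1) : Antitone fun E => c ^ Nat.count p E :=
  fun _ _ h => pow_le_pow_of_le_one hc0 hc1 (Nat.count_monotone p h)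

end Recursion

section Blocks

lemma count_add_of_forall_iff {p : ℕ → Prop} [DecidablePred p] {q : Prop} [Decidable q] {a m : ℕ}
    (h : ∀ i < m, p (a + i) ↔ q) : Nat.count p (a + m) = Nat.count p a + if q then m else 0 := by
  rw [Nat.count_add]
  split_ifs with hq
  · rw [Nat.count_of_forall fun i hi => (h i hi).2 hq]
  · rw [Nat.count_of_forall_not fun i hi => mt (h i hi).1 hq]

/-- On `[r², (r + 1)²)`: `r` copies of `g r`, then `r` copies of `!g r`, then `false`. -/
def blockBits (g : ℕ → Bool) (k : ℕ) : Bool :=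
  if k < k.sqrt * k.sqrt + k.sqrt then g k.sqrt
  else if k < k.sqrt * k.sqrt + 2 * k.sqrt then !g k.sqrt else false

variable (g : ℕ → Bool)

lemma blockBits_sq_add {r i : ℕ} (hi : i ≤ 2 * r) :
    blockBits g (r * r + i) = if i < r then g r else if i < 2 * r then !g r else false := by
  simp only [blockBits, Nat.sqrt_add_eq r (by omega : i ≤ r + r), Nat.add_lt_add_iff_left]

lemma count_blockBits_sq_add_self (r : ℕ) :
    Nat.count (blockBits g · = true) (r * r + r) =
      Nat.count (blockBits g · = true) (r * r) + if g r then r else 0 :=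
  count_add_of_forall_iff fun i hi => by rw [blockBits_sq_add g (by omega), if_pos hi]

lemma count_blockBits_succ_sq (r : ℕ) :
    Nat.count (blockBits g · = true) ((r + 1) * (r + 1)) =
      Nat.count (blockBits g · = true) (r * r) + r := by
  have hsecond : Nat.count (blockBits g · = true) (r * r + r + r) =
      Nat.count (blockBits g · = true) (r * r + r) + if (!g r) = true then r else 0 :=
    count_add_of_forall_iff fun i hi => by
      rw [add_assoc, blockBits_sq_add g (by omega), if_neg (by omega), if_pos (by omega)]
  have hlast : blockBits g (r * r + r + r) = false := by
    rw [add_assoc, blockBits_sq_add g (by omega), if_neg (by omega), if_neg (by omega)]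
  rw [show (r + 1) * (r + 1) = r * r + r + r + 1 by ring, Nat.count_succ, hlast, hsecond,
    count_blockBits_sq_add_self]
  cases g r <;> simp

lemma count_blockBits_sq (r : ℕ) :
    Nat.count (blockBits g · = true) (r * r) = ∑ i ∈ Finset.range r, i := by
  induction r with
  | zero => rfl
  | succ r ih => rw [count_blockBits_succ_sq, ih, Finset.sum_range_succ]

lemma tendsto_count_blockBits : Tendsto (Nat.count (blockBits g · = true)) atTop atTop :=
  tendsto_atTop_atTop_of_monotone (Nat.count_monotone _) fun r =>
    ⟨(r + 1) * (r + 1), by rw [count_blockBits_succ_sq]; omega⟩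

/-- With `Nat.unpair r = (Nat.bit ε j, P)`, block `r` follows `ξ j`, flipped if `ε`; since
`P ≤ r` is arbitrary, each `(j, ε)` steers arbitrarily long blocks. -/
def blockSign (ξ : ℕ → Bool) (r : ℕ) : Bool :=
  xor (ξ (Nat.unpair r).1.div2) (Nat.unpair r).1.bodd

lemma exists_blockSign_true_false {ξ ζ : ℕ → Bool} {j : ℕ} (hj : ξ j ≠ ζ j) (P : ℕ) :
    ∃ r, P ≤ r ∧ blockSign ξ r = true ∧ blockSign ζ r = false := by
  refine ⟨Nat.pair (Nat.bit (!ξ j) j) P, Nat.right_le_pair _ _, ?_, ?_⟩ <;>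
    simp only [blockSign, Nat.unpair_pair, Nat.div2_bit, Nat.bodd_bit]
  · cases ξ j <;> rfl
  · revert hj
    cases ξ j <;> cases ζ j <;> decide

lemma exists_count_add_le {ξ ζ : ℕ → Bool} (h : ξ ≠ ζ) (P : ℕ) :
    ∃ E, P ≤ E ∧ Nat.count (blockBits (blockSign ζ) · = true) E + P ≤
      Nat.count (blockBits (blockSign ξ) · = true) E := by
  obtain ⟨j, hj⟩ := Function.ne_iff.1 h
  obtain ⟨r, hPr, hξ, hζ⟩ := exists_blockSign_true_false hj P
  refine ⟨r * r + r, by omega, ?_⟩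
  simp only [count_blockBits_sq_add_self, count_blockBits_sq, hξ, hζ]
  simpa using hPr

end Blocks

section Interpolation

noncomputable def ramp (k : ℕ) (x : ℝ) : ℝ := min 1 (max 0 (2 ^ (k + 1) * x - 1))

lemma ramp_nonneg (k : ℕ) (x : ℝ) : 0 ≤ ramp k x := le_min zero_le_one (le_max_left _ _)

lemma ramp_le_one (k : ℕ) (x : ℝ) : ramp k x ≤ 1 := min_le_left _ _

lemma monotone_ramp (k : ℕ) : Monotone (ramp k) := fun _ _ h =>
  min_le_min_left _ (max_le_max_left _ (by gcongr))

lemma continuous_ramp (k : ℕ) : Continuous (ramp k) := by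
  unfold ramp
  fun_prop

lemma ramp_half (k m : ℕ) : ramp k (half m) = if m ≤ k then 1 else 0 := by
  have hx : (2 : ℝ) ^ (k + 1) * (half m : ℝ) = 2 ^ (k + 1) / 2 ^ m := by
    change (2 : ℝ) ^ (k + 1) * (1 / 2) ^ m = _
    rw [one_div_pow, mul_one_div]
  rw [ramp, hx]
  split_ifs with h
  · have : (2 : ℝ) ≤ 2 ^ (k + 1) / 2 ^ m := by
      rw [le_div_iff₀ (by positivity), ← pow_succ']
      exact pow_le_pow_right₀ one_le_two (by omega)
    rw [max_eq_right (by linarith), min_eq_left (by linarith)]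
  · have : (2 : ℝ) ^ (k + 1) / 2 ^ m ≤ 1 := by
      rw [div_le_one (by positivity)]
      exact pow_le_pow_right₀ one_le_two (by omega)
    rw [max_eq_left (by linarith), min_eq_right zero_le_one]

noncomputable def interpolate (u : ℕ → ℝ) (x : I) : ℝ := ∑' k, (u k - u (k + 1)) * ramp k x

variable {u : ℕ → ℝ}

lemma hasSum_sub_succ (hu : Antitone u) (hlim : Tendsto u atTop (𝓝 0)) (m : ℕ) :
    HasSum (fun k => u (k + m) - u (k + m + 1)) (u m) := by
  rw [hasSum_iff_tendsto_nat_of_nonneg (fun k => sub_nonneg.2 (hu (Nat.le_succ _)))]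
  have hpartial : ∀ N, ∑ k ∈ Finset.range N, (u (k + m) - u (k + m + 1)) = u m - u (N + m) :=
    fun N => by simpa [add_right_comm] using Finset.sum_range_sub' (fun k => u (k + m)) N
  simpa [hpartial] using tendsto_const_nhds.sub (hlim.comp (tendsto_add_atTop_nat m))

lemma interpolate_half (hu : Antitone u) (hlim : Tendsto u atTop (𝓝 0)) (m : ℕ) :
    interpolate u (half m) = u m := by
  refine HasSum.tsum_eq ((hasSum_nat_add_iff' m).1 ?_)
  have hhead : ∑ k ∈ Finset.range m, (u k - u (k + 1)) * ramp k (half m) = 0 :=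
    Finset.sum_eq_zero fun k hk => by
      rw [ramp_half, if_neg (by simpa using hk), mul_zero]
  rw [hhead, sub_zero]
  simpa [ramp_half] using hasSum_sub_succ hu hlim m

lemma summable_sub_succ_mul_ramp (hu : Antitone u) (hlim : Tendsto u atTop (𝓝 0)) (x : ℝ) :
    Summable fun k => (u k - u (k + 1)) * ramp k x :=
  .of_nonneg_of_le (fun k => mul_nonneg (sub_nonneg.2 (hu k.le_succ)) (ramp_nonneg k x))
    (fun k => mul_le_of_le_one_right (sub_nonneg.2 (hu k.le_succ)) (ramp_le_one k x))
    (hasSum_sub_succ hu hlim 0).summable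

lemma exists_continuous_monotone_interpolation (hu : Antitone u)
    (hlim : Tendsto u atTop (𝓝 0)) :
    ∃ φ : I → ℝ, Continuous φ ∧ Monotone φ ∧ (∀ x, 0 ≤ φ x) ∧ ∀ m, φ (half m) = u m := by
  have hw : ∀ k, 0 ≤ u k - u (k + 1) := fun k => sub_nonneg.2 (hu k.le_succ)
  refine ⟨interpolate u, ?_, fun x y hxy => ?_, fun x => ?_, interpolate_half hu hlim⟩
  · refine continuous_tsum (fun k => continuous_const.mul
      ((continuous_ramp k).comp continuous_subtype_val)) (hasSum_sub_succ hu hlim 0).summable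
      fun k x => ?_
    rw [Real.norm_of_nonneg (mul_nonneg (hw k) (ramp_nonneg k _))]
    exact mul_le_of_le_one_right (hw k) (ramp_le_one k _)
  · exact (summable_sub_succ_mul_ramp hu hlim _).tsum_le_tsum
      (fun k => mul_le_mul_of_nonneg_left (monotone_ramp k hxy) (hw k))
      (summable_sub_succ_mul_ramp hu hlim _)
  · exact tsum_nonneg fun k => mul_nonneg (hw k) (ramp_nonneg k _)

end Interpolation

lemma liminf_eq_zero_of_frequently_le {ι : Type*} {l : Filter ι} {f : ι → ℝ} (hf : ∀ i, 0 ≤ f i)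
    (h : ∀ ε > 0, ∃ᶠ i in l, f i ≤ ε) : liminf f l = 0 :=
  le_antisymm
    (le_of_forall_pos_le_add fun ε hε => by
      simpa using liminf_le_of_frequently_le (h ε hε) (isBoundedUnder_of ⟨0, hf⟩))
    (le_liminf_of_le (.of_frequently_le (h 1 one_pos)) (.of_forall hf))

lemma liminf_pow_div_pow_log_two_eq_zero {c : ℝ} (hc0 : 0 < c) (hc1 : c < 1) {N M : ℕ → ℕ}
    (h : ∀ P, ∃ E, P ≤ E ∧ M E + P ≤ N E) :
    liminf (fun n => c ^ N (Nat.log 2 n) / c ^ M (Nat.log 2 n)) atTop = 0 := by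
  refine liminf_eq_zero_of_frequently_le (fun n => by positivity) fun ε hε => ?_
  obtain ⟨P, hP⟩ := exists_pow_lt_of_lt_one hε hc1
  refine frequently_atTop.2 fun a => ?_
  obtain ⟨E, hE, hNM⟩ := h (max P a)
  refine ⟨2 ^ E, (le_max_right P a).trans (hE.trans Nat.lt_two_pow_self.le), ?_⟩
  rw [Nat.log_pow one_lt_two, div_le_iff₀ (by positivity)]
  calc c ^ N E ≤ c ^ (M E + P) := pow_le_pow_of_le_one hc0.le hc1.le (by omega)
    _ = c ^ P * c ^ M E := by rw [pow_add, mul_comm]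
    _ ≤ ε * c ^ M E := by gcongr

end PhiFamily

open PhiFamily in
/-- There is a continuum-sized family `{φ_ξ : ξ ∈ {0,1}^ω}` of continuous increasing
functions, each of whose values at `1/2ⁿ` satisfy the recursion, such that for
distinct `ξ, ζ` both liminfs of the quotients vanish. -/
theorem phi_family_exists (δ lam : ℝ)
    (hδ0 : 0 < δ) (hδ1 : δ < 1) (hlam0 : 0 < lam) (hlam1 : lam < 1) :
    ∃ φ : (ℕ → Bool) → unitInterval → ℝ,
      (∀ ξ : ℕ → Bool, Continuous (φ ξ) ∧ Monotone (φ ξ) ∧ (∀ x, 0 ≤ φ ξ x) ∧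
        φ ξ (half 0) = 1 ∧ φ ξ (half 1) = 1 ∧
        (∀ n : ℕ, 1 < n → φ ξ (half n) = φ ξ (half (n - 1)) ∨
          φ ξ (half n) = lam * φ ξ (half (n - 1)) +
            (1 - lam) * maxTerm δ (fun k => φ ξ (half k)) n)) ∧
      (∀ ξ ζ : ℕ → Bool, ξ ≠ ζ →
        Filter.liminf (fun n => φ ξ (half n) / φ ζ (half n)) Filter.atTop = 0 ∧
        Filter.liminf (fun n => φ ζ (half n) / φ ξ (half n)) Filter.atTop = 0) := by
  set c := lam + (1 - lam) * δ
  have hc0 : 0 < c := by nlinarith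
  have hc1 : c < 1 := by nlinarith
  set N : (ℕ → Bool) → ℕ → ℕ := fun ξ => Nat.count (blockBits (blockSign ξ) · = true)
  have hv : ∀ ξ, Antitone fun E => c ^ N ξ E := fun ξ =>
    antitone_pow_count _ hc0.le hc1.le
  choose φ hφcont hφmono hφnonneg hφhalf using fun ξ =>
    exists_continuous_monotone_interpolation (u := fun n => c ^ N ξ (Nat.log 2 n))
      ((hv ξ).comp_monotone fun _ _ => Nat.log_mono_right)
      ((tendsto_pow_atTop_nhds_zero_of_lt_one hc0.le hc1).comp
        ((tendsto_count_blockBits _).comp (tendsto_nat_log_atTop one_lt_two)))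
  refine ⟨φ, fun ξ => ⟨hφcont ξ, hφmono ξ, hφnonneg ξ, ?_, ?_, fun n hn => ?_⟩,
    fun ξ ζ h => ⟨?_, ?_⟩⟩ <;> simp only [hφhalf]
  · simp [N]
  · simp [N]
  · exact recursion_of_log_two hδ0.le (hv ξ) (fun _ => by positivity) (by simp [N])
      (pow_count_succ _) hn
  · exact liminf_pow_div_pow_log_two_eq_zero hc0 hc1 (exists_count_add_le h)
  · exact liminf_pow_div_pow_log_two_eq_zero hc0 hc1 (exists_count_add_le h.symm)
end
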